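/- arXiv:1511.04721 — 9 statements merged into one kernel-verified Lean document; each statement's English description precedes it below -/
import Mathlib

section
/- If a word W of length x over a finite ordered alphabet contains no subword of the form u^d (a d-th power of a nonempty word), then the ⌈x/d⌉ suffixes of W starting at its first ⌈x/d⌉ positions are pairwise comparable in the lexicographic order (i.e., no one of them is a proper prefix of another). -/
lemma aux_take_pow {α : Type*} (L : List α) (p : ℕ) (hp : L.drop p <+: L) :
    ∀ d, d * p ≤ L.length → L.take (d * p) = (List.replicate d (L.take p)).flatten := by
  intro d
  induction d with
  | zero => simp
  | succ d ih =>
    intro h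
    have hdp : d * p ≤ L.length - p := by
      have : (d + 1) * p = d * p + p := by ring
      omega
    rw [List.replicate_succ, List.flatten_cons, ← ih (le_trans hdp (Nat.sub_le _ _))]
    have e : (d + 1) * p = p + d * p := by ring
    rw [e, List.take_add]
    congr 1
    have hpre : L.drop p = L.take (L.length - p) := by
      have := List.prefix_iff_eq_take.mp hp
      simpa using this
    rw [hpre, List.take_take, min_eq_left hdp]

/-- If a word `W` of length `x` over a finite ordered alphabet contains no subword
of the form `u^d` (a `d`-th power of a nonempty word), then the `⌈x/d⌉` suffixes
of `W` starting at its first `⌈x/d⌉` positions are pairwise comparable, i.e.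
no one of them is a proper prefix of another. -/
theorem stmt_0 {α : Type*} [Fintype α] [LinearOrder α] (d : ℕ) (hd : 0 < d)
    (W : List α)
    (hnopow : ¬ ∃ u : List α, u ≠ [] ∧ (List.replicate d u).flatten <:+: W) :
    ∀ i j : ℕ, i < (W.length + d - 1) / d → j < (W.length + d - 1) / d → i ≠ j →
      ¬ (W.drop i <+: W.drop j ∧ W.drop i ≠ W.drop j) := by
  intro i j hi hj hne ⟨hpre, hneq⟩
  set x := W.length with hx
  have hmul : ((x + d - 1) / d) * d ≤ x + d - 1 := Nat.div_mul_le_self _ _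
  have hxi : d * i + 1 ≤ x := by
    have h1 : (i + 1) * d ≤ ((x + d - 1) / d) * d := Nat.mul_le_mul_right d hi
    have h2 : (i + 1) * d = d * i + d := by ring
    omega
  have hxj : d * j + 1 ≤ x := by
    have h1 : (j + 1) * d ≤ ((x + d - 1) / d) * d := Nat.mul_le_mul_right d hj
    have h2 : (j + 1) * d = d * j + d := by ring
    omega
  have hii : i ≤ d * i := Nat.le_mul_of_pos_left i hd
  have hjj : j ≤ d * j := Nat.le_mul_of_pos_left j hd
  rcases lt_or_gt_of_ne hne with h | h
  · have hlen := hpre.length_le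
    simp only [List.length_drop, ← hx] at hlen
    omega
  · set p := i - j with hp
    have hppos : 0 < p := by omega
    have hij : i = j + p := by omega
    have hdrop : (W.drop j).drop p <+: W.drop j := by
      rw [List.drop_drop, ← hij]; exact hpre
    have emul : d * p + d * j = d * i := by rw [hij]; ring
    have hlen : d * p ≤ (W.drop j).length := by
      simp only [List.length_drop, ← hx]; omega
    have hmain := aux_take_pow (W.drop j) p hdrop d hlen
    apply hnopow
    refine ⟨(W.drop j).take p, ?_, ?_⟩
    · simp only [ne_eq, List.take_eq_nil_iff, List.drop_eq_nil_iff, not_or, ← hx]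
      constructor <;> omega
    · rw [← hmain]
      exact ((List.take_prefix _ _).isInfix).trans (List.drop_suffix _ _).isInfix
end

section
/- If a word V of length k·t contains at most k distinct subwords (contiguous factors) of length k, then V contains a subword of the form u^t for some nonempty word u. -/
namespace Stmt1Aux

variable {α : Type*}

/-- The factor of length `n` of the infinite word `v` starting at position `x`. -/
def fct (v : ℕ → α) (n x : ℕ) : List α := (List.range n).map (fun z => v (x + z))

lemma fct_length (v : ℕ → α) (n x : ℕ) : (fct v n x).length = n := by
  simp [fct]

lemma fct_eq_iff {v : ℕ → α} {n x y : ℕ} :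
    fct v n x = fct v n y ↔ ∀ z < n, v (x + z) = v (y + z) := by
  simp [fct, List.map_inj_left]

lemma fct_take (v : ℕ → α) (m x : ℕ) : (fct v (m + 1) x).take m = fct v m x := by
  have h : m ⊓ (m + 1) = m := by omega
  simp [fct, ← List.map_take, List.take_range, h]

lemma fct_append (v : ℕ → α) (n₁ n₂ x : ℕ) :
    fct v (n₁ + n₂) x = fct v n₁ x ++ fct v n₂ (x + n₁) := by
  simp [fct, List.range_add, List.map_map, Function.comp, add_assoc]

lemma fct_eq_take_drop (V : List α) (d : α) (n x : ℕ) (h : x + n ≤ V.length) :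
    fct (fun i => V.getD i d) n x = (V.drop x).take n := by
  apply List.ext_getElem
  · simp [fct_length]; omega
  · intro i h1 h2
    have hi : i < n := by simpa [fct_length] using h1
    have hxi : x + i < V.length := by omega
    simp [fct, List.getElem?_eq_getElem hxi]

lemma fct_isInfix (V : List α) (d : α) (n x : ℕ) (h : x + n ≤ V.length) :
    fct (fun i => V.getD i d) n x <:+: V := by
  rw [fct_eq_take_drop V d n x h]
  exact (List.take_prefix _ _).isInfix.trans (List.drop_suffix _ _).isInfix

lemma pow_eq (v : ℕ → α) (p a t : ℕ)
    (hper : ∀ y, a ≤ y → y + p < a + t * p → v y = v (y + p)) :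
    ∀ s, s ≤ t → (List.replicate s (fct v p a)).flatten = fct v (s * p) a := by
  intro s
  induction s with
  | zero => intro _; simp [fct]
  | succ s IH =>
    intro hs
    rw [List.replicate_succ, List.flatten_cons, IH (by omega)]
    have h1 : fct v ((s + 1) * p) a = fct v p a ++ fct v (s * p) (a + p) := by
      have h2 : (s + 1) * p = p + s * p := by ring
      rw [h2, fct_append]
    rw [h1]
    congr 1
    apply fct_eq_iff.mpr
    intro z hz
    have hmul : (s + 1) * p ≤ t * p := Nat.mul_le_mul_right p hs
    have hsp : s * p + p = (s + 1) * p := by ring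
    have hbd : a + z + p < a + t * p := by omega
    have := hper (a + z) (by omega) hbd
    have e : a + p + z = a + z + p := by omega
    rw [e]
    exact this

lemma key [DecidableEq (List α)] (t : ℕ) (ht : 2 ≤ t) :
    ∀ k, 1 ≤ k → ∀ N, k * t ≤ N → ∀ v : ℕ → α,
      ((Finset.range (N - k + 1)).image (fct v k)).card ≤ k →
      ∃ p a, 1 ≤ p ∧ p ≤ k ∧ a + t * p ≤ N ∧
        ∀ y, a ≤ y → y + p < a + t * p → v y = v (y + p) := by
  intro k
  induction k with
  | zero => intro h; omega
  | succ k IH =>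
    intro _ N hN v hcard
    have hexp : (k + 1) * t = k * t + t := by ring
    have h2N : 2 * (k + 1) ≤ N := by
      have := Nat.mul_le_mul_left (k + 1) ht
      have e : (k+1) * 2 = 2 * (k+1) := by ring
      omega
    rcases Nat.eq_zero_or_pos k with hk0 | hk1
    · -- base case k + 1 = 1
      subst hk0
      refine ⟨1, 0, le_rfl, le_rfl, by omega, ?_⟩
      intro y _ hy
      have ht1 : t * 1 = t := by ring
      have hall : ∀ x, x < N → v x = v 0 := by
        intro x hx
        have hx1 : fct v 1 x ∈ (Finset.range (N - 1 + 1)).image (fct v 1) :=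
          Finset.mem_image_of_mem _ (Finset.mem_range.2 (by omega))
        have hx0 : fct v 1 0 ∈ (Finset.range (N - 1 + 1)).image (fct v 1) :=
          Finset.mem_image_of_mem _ (Finset.mem_range.2 (by omega))
        have := Finset.card_le_one.mp hcard _ hx1 _ hx0
        have := fct_eq_iff.mp this 0 (by omega)
        simpa using this
      have h1 : v y = v 0 := hall y (by omega)
      have h2 : v (y + 1) = v 0 := hall (y + 1) (by omega)
      rw [h1, h2]
    · -- inductive step
      set E := (Finset.range (N - (k + 1) + 1)).image (fct v k) with hE
      set Fk := (Finset.range (N - (k + 1) + 1)).image (fct v (k + 1)) with hFk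
      have hEF : E = Fk.image (fun w => w.take k) := by
        rw [hFk, Finset.image_image]
        apply Finset.image_congr
        intro x _
        exact (fct_take v k x).symm
      rcases le_or_gt E.card k with hle | hgt
      · -- recurse
        obtain ⟨p, a, hp1, hpk, hwin, hper⟩ := IH hk1 (N - 1) (by omega) v (by
          have e : N - 1 - k + 1 = N - (k + 1) + 1 := by omega
          rw [e]; exact hle)
        exact ⟨p, a, hp1, by omega, by omega, hper⟩
      · -- determinism case
        have hFkcard : Fk.card ≤ k + 1 := hcard
        have hEcard : E.card ≤ Fk.card := by rw [hEF]; exact Finset.card_image_le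
        have hcards : (Fk.image (fun w => w.take k)).card = Fk.card := by
          rw [← hEF]; omega
        have hinj : Set.InjOn (fun w : List α => w.take k) ↑Fk :=
          Finset.injOn_of_card_image_eq hcards
        have det : ∀ x y, x + (k + 1) ≤ N → y + (k + 1) ≤ N →
            fct v k x = fct v k y → v (x + k) = v (y + k) := by
          intro x y hx hy hxy
          have hxF : fct v (k + 1) x ∈ Fk :=
            Finset.mem_image_of_mem _ (Finset.mem_range.2 (by omega))
          have hyF : fct v (k + 1) y ∈ Fk :=
            Finset.mem_image_of_mem _ (Finset.mem_range.2 (by omega))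
          have heq : fct v (k + 1) x = fct v (k + 1) y := by
            apply hinj hxF hyF
            simp only
            rw [fct_take, fct_take]
            exact hxy
          have := fct_eq_iff.mp heq k (by omega)
          simpa using this
        -- pigeonhole among positions 0..k+1
        have hmaps : ∀ x ∈ Finset.range (k + 2), fct v k x ∈ E := by
          intro x hx
          have hx2 : x < k + 2 := Finset.mem_range.mp hx
          exact Finset.mem_image_of_mem _ (Finset.mem_range.2 (by omega))
        obtain ⟨x₀, hx₀, y₀, hy₀, hne, heq0⟩ :=
          Finset.exists_ne_map_eq_of_card_lt_of_maps_to (s := Finset.range (k + 2)) (t := E)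
            (by rw [Finset.card_range]; omega) hmaps
        have hx₀' : x₀ < k + 2 := Finset.mem_range.mp hx₀
        have hy₀' : y₀ < k + 2 := Finset.mem_range.mp hy₀
        obtain ⟨i, j, hij, hjk, hfij⟩ : ∃ i j, i < j ∧ j ≤ k + 1 ∧ fct v k i = fct v k j := by
          rcases Nat.lt_or_ge x₀ y₀ with h | h
          · exact ⟨x₀, y₀, h, by omega, heq0⟩
          · have h' : y₀ < x₀ := by omega
            exact ⟨y₀, x₀, h', by omega, heq0.symm⟩
        have per : ∀ y, i ≤ y → y + (j - i) + 1 ≤ N → v y = v (y + (j - i)) := by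
          intro y
          induction y using Nat.strong_induction_on with
          | _ y IH2 =>
            intro hiy hyN
            rcases Nat.lt_or_ge y (i + k) with hcase | hcase
            · have hz := fct_eq_iff.mp hfij (y - i) (by omega)
              have e1 : i + (y - i) = y := by omega
              have e2 : j + (y - i) = y + (j - i) := by omega
              rw [e1, e2] at hz; exact hz
            · have hfx : fct v k (y - k) = fct v k (y - k + (j - i)) := by
                apply fct_eq_iff.mpr
                intro z hz
                have := IH2 (y - k + z) (by omega) (by omega) (by omega)
                have e : y - k + z + (j - i) = y - k + (j - i) + z := by omega
                rw [e] at this; exact this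
              have hd := det (y - k) (y - k + (j - i)) (by omega) (by omega) hfx
              have e1 : y - k + k = y := by omega
              have e2 : y - k + (j - i) + k = y + (j - i) := by omega
              rw [e1, e2] at hd; exact hd
        -- window bound
        have ht1 : i ≤ t * i := Nat.le_mul_of_pos_left i (by omega)
        have ht2 : t * i + t * (j - i) = t * j := by
          rw [← Nat.mul_add]; congr 1; omega
        have ht3 : t * j ≤ t * (k + 1) := Nat.mul_le_mul_left t hjk
        have ht4 : t * (k + 1) ≤ N := by rw [Nat.mul_comm]; exact hN
        have hwin : i + t * (j - i) ≤ N := by omega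
        refine ⟨j - i, i, by omega, by omega, hwin, ?_⟩
        intro y h1 h2
        exact per y h1 (by omega)

end Stmt1Aux

/-- If a word `V` of length `k·t` contains at most `k` distinct subwords
(contiguous factors) of length `k`, then `V` contains a subword of the form
`u^t` for some nonempty word `u`. -/
theorem stmt_1 {α : Type*} (k t : ℕ) (hk : 0 < k) (ht : 0 < t)
    (V : List α) (hlen : V.length = k * t)
    (S : Finset (List α)) (hS : S.card ≤ k)
    (hsub : ∀ w : List α, w.length = k → w <:+: V → w ∈ S) :
    ∃ u : List α, u ≠ [] ∧ (List.replicate t u).flatten <:+: V := by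
  classical
  have hVlen : 0 < V.length := by rw [hlen]; positivity
  have hVne : V ≠ [] := List.ne_nil_of_length_pos hVlen
  rcases Nat.lt_or_ge t 2 with ht2 | ht2
  · -- t = 1
    have : t = 1 := by omega
    subst this
    refine ⟨V, hVne, ?_⟩
    simp
  · obtain ⟨d, _⟩ := List.exists_mem_of_ne_nil V hVne
    set v : ℕ → α := fun i => V.getD i d with hv
    have hN : k * t ≤ V.length := by omega
    have hT : ((Finset.range (V.length - k + 1)).image (Stmt1Aux.fct v k)).card ≤ k := by
      refine le_trans (Finset.card_le_card ?_) hS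
      intro w hw
      obtain ⟨x, hx, rfl⟩ := Finset.mem_image.mp hw
      have hx' : x < V.length - k + 1 := Finset.mem_range.mp hx
      have hk' : k ≤ V.length := by
        rw [hlen]; exact Nat.le_mul_of_pos_right k ht
      have hxk : x + k ≤ V.length := by omega
      exact hsub _ (Stmt1Aux.fct_length v k x) (Stmt1Aux.fct_isInfix V d k x hxk)
    obtain ⟨p, a, hp1, hpk, hwin, hper⟩ :=
      Stmt1Aux.key t ht2 k hk V.length hN v hT
    refine ⟨Stmt1Aux.fct v p a, ?_, ?_⟩
    · apply List.ne_nil_of_length_pos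
      rw [Stmt1Aux.fct_length]; omega
    · rw [Stmt1Aux.pow_eq v p a t hper t le_rfl]
      exact Stmt1Aux.fct_isInfix V d (t * p) a hwin
end

section
/- Let p ≥ 2. Consider any finite sequence S of words, each of length k−1 over the alphabet {0,1}, each containing exactly one symbol '1'. Suppose S satisfies: whenever p of the words in S have their '1' in the same position s, then strictly between the first and the p-th of these words there is a word whose '1' occurs in a position strictly smaller than s. Then the length of S is at most p^(k−1) − 1. -/
/-!
Let `s i` be the position of the `1` in the `i`-th word. By induction on `n`, fewer than `p ^ n`
words have `s < n`: the `c` words with `s < n` cut the sequence into at most `c + 1` gaps, and by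
hypothesis each gap contains at most `p - 1` words with `s = n`. Hence
`#{s < n + 1} + 1 ≤ p * (c + 1) ≤ p ^ (n + 1)`.
-/

open Finset

theorem card_le_mul_card_add_one_of_separated {ι : Type*} [LinearOrder ι] {A B : Finset ι}
    {p : ℕ}
    (hsep : ∀ f : Fin p → ι, StrictMono f → (∀ i, f i ∈ B) →
      ∃ a ∈ A, ∃ i j, f i < a ∧ a < f j) :
    #B ≤ (p - 1) * (#A + 1) := by
  classical
  -- `next` is constant on each gap between consecutive elements of `A`.
  set next : ι → WithTop ι := fun x => {a ∈ A | x < a}.min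
  have next_le {x a : ι} (ha : a ∈ A) (hxa : x < a) : next x ≤ a := min_le (by simp [ha, hxa])
  have lt_next (x : ι) : (x : WithTop ι) < next x := by
    cases h : next x with
    | top => exact WithTop.coe_lt_top x
    | coe a => exact WithTop.coe_lt_coe.2 (mem_filter.1 (mem_of_min h)).2
  have fiber_card : ∀ v ∈ B.image next, #{x ∈ B | next x = v} ≤ p - 1 := by
    intro v _
    by_contra! hbig
    obtain ⟨T, hTsub, hTcard⟩ :=
      exists_subset_card_eq (show p ≤ #{x ∈ B | next x = v} by omega)
    set f := T.orderEmbOfFin hTcard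
    have hf (i : Fin p) : f i ∈ B ∧ next (f i) = v :=
      mem_filter.1 (hTsub (T.orderEmbOfFin_mem hTcard i))
    obtain ⟨a, ha, i, j, hia, haj⟩ := hsep f f.strictMono (fun i => (hf i).1)
    have : next (f j) < next (f j) := calc
      next (f j) = next (f i) := (hf j).2.trans (hf i).2.symm
      _ ≤ a := next_le ha hia
      _ < f j := WithTop.coe_lt_coe.2 haj
      _ < next (f j) := lt_next _
    exact lt_irrefl _ this
  have image_sub : B.image next ⊆ insert ⊤ (A.image (↑)) := by
    intro v hv
    obtain ⟨x, -, rfl⟩ := mem_image.1 hv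
    exact insert_subset_insert _ (image_subset_image (filter_subset _ _))
      (min_mem_insert_top_image_coe _)
  calc #B ≤ (p - 1) * #(B.image next) := card_le_mul_card_image B (p - 1) fiber_card
    _ ≤ (p - 1) * (#A + 1) := by
      gcongr
      exact (card_le_card image_sub).trans
        ((card_insert_le _ _).trans (by gcongr; exact card_image_le))

theorem card_filter_lt_lt_pow_of_separated {ι : Type*} [LinearOrder ι] [Fintype ι] {p : ℕ}
    (hp : 0 < p) (s : ι → ℕ)
    (hsep : ∀ f : Fin p → ι, StrictMono f → (∀ i j, s (f i) = s (f j)) →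
      ∃ m i j, f i < m ∧ m < f j ∧ s m < s (f i)) (n : ℕ) :
    #{x | s x < n} < p ^ n := by
  induction n with
  | zero => simp
  | succ n ih =>
    have level : #{x | s x = n} ≤ (p - 1) * (#{x | s x < n} + 1) := by
      refine card_le_mul_card_add_one_of_separated fun f hf hfB => ?_
      have hfn (i : Fin p) : s (f i) = n := (mem_filter.1 (hfB i)).2
      obtain ⟨m, i, j, hm_i, hm_j, hsm⟩ := hsep f hf fun i j => (hfn i).trans (hfn j).symm
      exact ⟨m, mem_filter.2 ⟨mem_univ m, hfn i ▸ hsm⟩, i, j, hm_i, hm_j⟩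
    have split : #{x | s x < n + 1} ≤ #{x | s x < n} + #{x | s x = n} := by
      refine (card_le_card fun x hx => ?_).trans (card_union_le _ _)
      simp only [mem_filter, mem_univ, true_and, mem_union] at hx ⊢
      omega
    calc #{x | s x < n + 1} < p * (#{x | s x < n} + 1) := by
          have : (p - 1) * (#{x | s x < n} + 1) + (#{x | s x < n} + 1) =
              p * (#{x | s x < n} + 1) := by
            rw [← Nat.succ_mul, Nat.succ_eq_add_one, Nat.sub_add_cancel hp]
          omega
      _ ≤ p ^ (n + 1) := by rw [pow_succ']; exact Nat.mul_le_mul_left p ih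

/-- The "process lemma": a sequence of `N` words over `{0,1}`, each of length `k-1`
containing exactly one `1`, such that among any `p` words whose `1` is at the same
position there is, strictly between the first and the `p`-th of them, a word whose
`1` is at a strictly smaller position, has length `N ≤ p^(k-1) - 1`. -/
theorem stmt_3 (p k N : ℕ) (hp : 2 ≤ p)
    (w : Fin N → List Bool)
    (hlen : ∀ i, (w i).length = k - 1)
    (hone : ∀ i, (w i).count true = 1)
    (hcond : ∀ f : Fin p → Fin N, StrictMono f →
      (∀ a b : Fin p, (w (f a)).idxOf true = (w (f b)).idxOf true) →
      ∃ m : Fin N, f ⟨0, by omega⟩ < m ∧ m < f ⟨p - 1, by omega⟩ ∧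
        (w m).idxOf true < (w (f ⟨0, by omega⟩)).idxOf true) :
    N ≤ p ^ (k - 1) - 1 := by
  have hpos (i : Fin N) : (w i).idxOf true < k - 1 :=
    hlen i ▸ List.idxOf_lt_length_iff.2 (List.count_pos_iff.1 (by rw [hone i]; exact Nat.one_pos))
  have hcount := card_filter_lt_lt_pow_of_separated (by omega) (fun i => (w i).idxOf true)
    (fun f hf heq => (hcond f hf heq).imp fun m hm => ⟨_, _, hm⟩) (k - 1)
  rw [filter_true_of_mem fun i _ => hpos i, card_univ, Fintype.card_fin] at hcount
  omega
end

section
/- The number of multilinear words of length n over an n-letter ordered alphabet (words in which every letter occurs exactly once) that are not m-divisible is at most (m−1)^(2n), where a word is m-divisible if it contains m pairwise disjoint consecutive subwords occurring in strictly decreasing lexicographic order. -/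
/-- A word `W` over an ordered alphabet is `m`-divisible if
`W = v ++ u_1 ++ ⋯ ++ u_m` with the `u_i` nonempty and strictly decreasing
in the lexicographic order. -/
def IsMDivisible {α : Type*} [LT α] (m : ℕ) (W : List α) : Prop :=
  ∃ (v : List α) (us : List (List α)), us.length = m ∧ (∀ u ∈ us, u ≠ []) ∧
    W = v ++ us.flatten ∧ us.Chain' (fun a b => b < a)

/-!
Label each letter `a` of `W` by `λ(a)`, the largest length of a list `l` such that `a :: l`
is a strictly decreasing subsequence of `W`. A decreasing subsequence `a₁ > ⋯ > aₘ` of `W`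
cuts `W` into pieces beginning with `a₁, …, aₘ`, which are lexicographically decreasing; so
if `W` is not `m`-divisible, every label is `< m - 1`. If `a` precedes `b` in `W` and
`b < a` then `λ(b) < λ(a)`, so letters with equal labels occur in increasing order. Hence a
multilinear word is determined by the sequence of labels along its positions together with
the labels of the letters, which is a pair of maps `Fin n → Fin (m - 1)`.
-/

namespace List

variable {α : Type*}

theorem eq_of_perm_of_map_eq_of_pairwise [Preorder α] {β : Type*} (g : α → β) :
    ∀ {W W' : List α}, W ~ W' → W.map g = W'.map g →
      W.Pairwise (fun a b => g a = g b → a < b) →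
      W'.Pairwise (fun a b => g a = g b → a < b) → W = W'
  | [], _, hp, _, _, _ => hp.nil_eq
  | _ :: _, [], hp, _, _, _ => absurd hp.length_eq (by simp)
  | a :: W, a' :: W', hp, hmap, hW, hW' => by
    simp only [map_cons, cons.injEq] at hmap
    obtain ⟨hg, hmap⟩ := hmap
    obtain rfl : a = a' := by
      by_contra hne
      have ha' : a' ∈ W := by simpa [Ne.symm hne] using hp.symm.subset mem_cons_self
      have ha : a ∈ W' := by simpa [hne] using hp.subset mem_cons_self
      exact lt_asymm ((pairwise_cons.mp hW).1 a' ha' hg) ((pairwise_cons.mp hW').1 a ha hg.symm)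
    rw [eq_of_perm_of_map_eq_of_pairwise g hp.cons_inv hmap (pairwise_cons.mp hW).2
      (pairwise_cons.mp hW').2]

theorem Nodup.cons_cons_sublist {a b : α} {l : List α} :
    ∀ {W : List α}, W.Nodup → [a, b] <+ W → b :: l <+ W → a :: b :: l <+ W
  | [], _, hab, _ => absurd hab (by simp)
  | x :: W, hW, hab, hb => by
    rw [nodup_cons] at hW
    rcases sublist_cons_iff.mp hab with habW | ⟨r, hr, hbr⟩
    · rcases sublist_cons_iff.mp hb with hbW | ⟨_, hr', _⟩
      · exact (hW.2.cons_cons_sublist habW hbW).cons x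
      · obtain ⟨rfl, -⟩ := cons.inj hr'
        exact absurd (habW.subset (by simp)) hW.1
    · obtain ⟨rfl, rfl⟩ := cons.inj hr
      rcases sublist_cons_iff.mp hb with hbW | ⟨_, hr', _⟩
      · exact hbW.cons_cons a
      · obtain ⟨rfl, -⟩ := cons.inj hr'
        exact absurd (hbr.subset (by simp)) hW.1

theorem perm_finRange_of_nodup {n : ℕ} {W : List (Fin n)} (hlen : W.length = n) (hW : W.Nodup) :
    W ~ finRange n :=
  (hW.subperm fun a _ => mem_finRange a).perm_of_length_le (by simp [hlen])

end List

open List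

section Divisibility

variable {α : Type*} [LT α]

theorem exists_decreasing_split_of_cons_sublist :
    ∀ {W : List α} {a : α} {l : List α}, a :: l <+ W → (a :: l).IsChain (· > ·) →
      ∃ (v : List α) (us : List (List α)) (t : List α), us.length = l.length + 1 ∧
        (∀ u ∈ us, u ≠ []) ∧ W = v ++ us.flatten ∧ us.IsChain (· > ·) ∧
        us.head? = some (a :: t)
  | [], _, _, h, _ => absurd h (by simp)
  | x :: W, a, l, h, hc => by
    rcases sublist_cons_iff.mp h with h | ⟨r, hr, hl⟩
    · obtain ⟨v, us, t, hlen, hne, rfl, hus, hhead⟩ :=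
        exists_decreasing_split_of_cons_sublist h hc
      exact ⟨x :: v, us, t, hlen, hne, rfl, hus, hhead⟩
    obtain ⟨rfl, rfl⟩ := cons.inj hr
    cases l with
    | nil => exact ⟨[], [a :: W], W, rfl, by simp, by simp, isChain_singleton _, rfl⟩
    | cons b l =>
      obtain ⟨v, us, t, hlen, hne, rfl, hus, hhead⟩ :=
        exists_decreasing_split_of_cons_sublist hl hc.tail
      refine ⟨[], (a :: v) :: us, v, by simp [hlen], ?_, by simp, ?_, rfl⟩
      · simpa using hne
      · refine isChain_cons.mpr ⟨fun u hu => ?_, hus⟩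
        rw [hhead, Option.mem_some_iff] at hu
        exact hu ▸ Lex.rel (isChain_cons_cons.mp hc).1

theorem isMDivisible_length_of_sublist {l W : List α} (hl : l <+ W) (hc : l.IsChain (· > ·)) :
    IsMDivisible l.length W := by
  cases l with
  | nil => exact ⟨W, [], rfl, by simp, by simp, .nil⟩
  | cons a l =>
    obtain ⟨v, us, t, hlen, hne, hW, hus, -⟩ := exists_decreasing_split_of_cons_sublist hl hc
    exact ⟨v, us, hlen, hne, hW, hus⟩

theorem isMDivisible_of_sublist_of_le {m : ℕ} {l W : List α} (hl : l <+ W)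
    (hc : l.IsChain (· > ·)) (hm : m ≤ l.length) : IsMDivisible m W := by
  simpa [hm] using isMDivisible_length_of_sublist ((take_sublist m l).trans hl) (hc.take m)

end Divisibility

section LongestDecTail

variable {α : Type*} [LinearOrder α] {W l : List α} {a b : α}

open Classical in
noncomputable def decTails (W : List α) (a : α) : Finset (List α) :=
  {l ∈ W.sublists.toFinset | a :: l <+ W ∧ (a :: l).IsChain (· > ·)}

theorem mem_decTails : l ∈ decTails W a ↔ a :: l <+ W ∧ (a :: l).IsChain (· > ·) := by
  simpa [decTails] using fun h _ => (sublist_cons_self a l).trans h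

noncomputable def longestDecTail (W : List α) (a : α) : ℕ :=
  (decTails W a).sup length

theorem length_le_longestDecTail (hl : a :: l <+ W) (hc : (a :: l).IsChain (· > ·)) :
    l.length ≤ longestDecTail W a :=
  Finset.le_sup (mem_decTails.mpr ⟨hl, hc⟩)

theorem exists_length_eq_longestDecTail (ha : a ∈ W) :
    ∃ l, a :: l <+ W ∧ (a :: l).IsChain (· > ·) ∧ l.length = longestDecTail W a := by
  obtain ⟨l, hl, heq⟩ := Finset.exists_mem_eq_sup (decTails W a)
    ⟨[], mem_decTails.mpr ⟨by simpa using ha, isChain_singleton a⟩⟩ length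
  exact ⟨l, (mem_decTails.mp hl).1, (mem_decTails.mp hl).2, heq.symm⟩

theorem longestDecTail_lt_of_not_isMDivisible {m : ℕ} (hW : ¬ IsMDivisible m W) (ha : a ∈ W) :
    longestDecTail W a < m - 1 := by
  obtain ⟨l, hl, hc, hlen⟩ := exists_length_eq_longestDecTail ha
  by_contra! h
  exact hW (isMDivisible_of_sublist_of_le hl hc (by simp; omega))

theorem longestDecTail_lt_of_sublist (hW : W.Nodup) (hab : [a, b] <+ W) (hba : b < a) :
    longestDecTail W b < longestDecTail W a := by
  obtain ⟨l, hl, hc, hlen⟩ := exists_length_eq_longestDecTail (hab.subset (by simp) : b ∈ W)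
  have := length_le_longestDecTail (hW.cons_cons_sublist hab hl)
    (isChain_cons_cons.mpr ⟨hba, hc⟩)
  simp only [length_cons] at this
  omega

theorem pairwise_longestDecTail (hW : W.Nodup) :
    W.Pairwise (fun a b => longestDecTail W a = longestDecTail W b → a < b) := by
  refine pairwise_iff_forall_sublist.mpr fun {a b} hab heq => ?_
  rcases lt_trichotomy a b with h | rfl | h
  · exact h
  · exact absurd hab (nodup_iff_sublist.mp hW a)
  · exact absurd heq (longestDecTail_lt_of_sublist hW hab h).ne'

end LongestDecTail

section Encoding

variable {n : ℕ}

noncomputable def labelCode (W : List (Fin n)) : (Fin n → ℕ) × (Fin n → ℕ) :=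
  (fun i => (W.map (longestDecTail W)).getD i 0, longestDecTail W)

theorem labelCode_mem_of_not_isMDivisible {m : ℕ} {W : List (Fin n)} (hlen : W.length = n)
    (hW : W.Nodup) (hdiv : ¬ IsMDivisible m W) :
    labelCode W ∈ Fintype.piFinset (fun _ => Finset.range (m - 1)) ×ˢ
      Fintype.piFinset (fun _ => Finset.range (m - 1)) := by
  have hlt {a} (ha : a ∈ W) := longestDecTail_lt_of_not_isMDivisible hdiv ha
  simp only [labelCode, Finset.mem_product, Fintype.mem_piFinset, Finset.mem_range]
  refine ⟨fun i => ?_, fun a => hlt ((perm_finRange_of_nodup hlen hW).mem_iff.mpr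
    (mem_finRange a))⟩
  rw [getD_eq_getElem _ _ (by simp [hlen]), getElem_map]
  exact hlt (getElem_mem _)

theorem labelCode_injOn : Set.InjOn labelCode {W : List (Fin n) | W.length = n ∧ W.Nodup} := by
  rintro W ⟨hlen, hW⟩ W' ⟨hlen', hW'⟩ heq
  obtain ⟨hpos, hlab : longestDecTail W = longestDecTail W'⟩ := Prod.ext_iff.mp heq
  refine eq_of_perm_of_map_eq_of_pairwise (longestDecTail W)
    ((perm_finRange_of_nodup hlen hW).trans (perm_finRange_of_nodup hlen' hW').symm)
    (ext_getElem (by simp [hlen, hlen']) fun i hi hi' => ?_)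
    (pairwise_longestDecTail hW) (hlab ▸ pairwise_longestDecTail hW')
  have := congrFun hpos ⟨i, by simpa [hlen] using hi⟩
  simp only [labelCode] at this
  rwa [getD_eq_getElem _ _ hi, ← hlab, getD_eq_getElem _ _ hi'] at this

end Encoding

/-- The number of multilinear words of length `n` over an `n`-letter ordered
alphabet that are not `m`-divisible is at most `(m-1)^(2n)`. -/
theorem stmt_4 (n m : ℕ) :
    Set.ncard {W : List (Fin n) | W.length = n ∧ W.Nodup ∧ ¬ IsMDivisible m W} ≤
      (m - 1) ^ (2 * n) := by
  calc _ ≤ ((Fintype.piFinset (fun _ : Fin n => Finset.range (m - 1)) ×ˢ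
        Fintype.piFinset (fun _ : Fin n => Finset.range (m - 1)) : Finset _) : Set _).ncard :=
        Set.ncard_le_ncard_of_injOn labelCode
          (fun W hW => labelCode_mem_of_not_isMDivisible hW.1 hW.2.1 hW.2.2)
          (labelCode_injOn.mono (Set.ofPred_subset_ofPred.mpr fun _ => And.imp_right And.left))
    _ = (m - 1) ^ (2 * n) := by
      rw [Set.ncard_coe_finset, Finset.card_product, Fintype.card_piFinset]
      simp [two_mul, pow_add]
end

section
/- A permutation π of {1, ..., n}, viewed as the word π(1)π(2)...π(n), is not m-divisible (contains no m disjoint consecutive blocks in strictly decreasing lexicographic order) if and only if π has no decreasing subsequence of length m, i.e., π avoids the pattern m(m−1)...1. -/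
namespace List

variable {α : Type*}

theorem IsChain.imp_of_pairwise {R S T : α → α → Prop} {l : List α}
    (h : ∀ a b, R a b → S a b → T a b) (hR : l.IsChain R) (hS : l.Pairwise S) :
    l.IsChain T := by
  induction hS with
  | nil => exact .nil
  | @cons a l hab _ ih =>
    rw [List.isChain_cons] at hR ⊢
    exact ⟨fun b hb => h a b (hR.1 b hb) (hab b (mem_of_mem_head? hb)), ih hR.2⟩

theorem lt_of_head?_lt [LT α] {a b : List α} (h : a.head? < b.head?) : a < b := by
  match a, b with
  | [], _ :: _ => exact Lex.nil
  | _ :: _, _ :: _ => exact Lex.rel (Option.some_lt_some.1 h)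
  | _, [] => simp at h

theorem head?_lt_head?_of_lt [LT α] {a b : List α} (h : a < b) (hab : a.Disjoint b) :
    a.head? < b.head? := by
  cases h with
  | nil => exact Option.none_lt_some
  | cons => exact ((disjoint_cons_left.1 hab).1 mem_cons_self).elim
  | rel h => exact Option.some_lt_some.2 h

section Heads

/-! An equation `us.map head? = l.map some` says that the words `us` are nonempty and that `l` is
the list of their first letters. -/

variable {us : List (List α)} {l : List α}

theorem exists_map_head?_eq_map_some (hus : ∀ u ∈ us, u ≠ []) :
    ∃ l : List α, us.map head? = l.map some := by
  induction us with
  | nil => exact ⟨[], rfl⟩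
  | cons u us ih =>
    obtain ⟨x, u', rfl⟩ := exists_cons_of_ne_nil (hus u mem_cons_self)
    obtain ⟨l, hl⟩ := ih fun u hu => hus u (mem_cons_of_mem _ hu)
    exact ⟨x :: l, by simp [hl]⟩

theorem Sublist.exists_eq_append_flatten {W : List α} (h : l <+ W) :
    ∃ (v : List α) (us : List (List α)), W = v ++ us.flatten ∧ us.map head? = l.map some := by
  induction h with
  | slnil => exact ⟨[], [], rfl, rfl⟩
  | cons a _ ih =>
    obtain ⟨v, us, rfl, hus⟩ := ih
    exact ⟨a :: v, us, rfl, hus⟩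
  | cons_cons a _ ih =>
    obtain ⟨v, us, rfl, hus⟩ := ih
    exact ⟨[], (a :: v) :: us, by simp, by simp [hus]⟩

theorem ne_nil_of_map_head?_eq_map_some (h : us.map head? = l.map some) {u : List α}
    (hu : u ∈ us) : u ≠ [] := by
  rintro rfl
  have := mem_map_of_mem (f := head?) hu
  simp [h] at this

theorem sublist_flatten_of_map_head?_eq_map_some (h : us.map head? = l.map some) :
    l <+ us.flatten := by
  induction us generalizing l with
  | nil => cases l <;> simp_all
  | cons u us ih =>
    cases l with
    | nil => simp at h
    | cons x l =>
      obtain ⟨hu, hus⟩ : u.head? = some x ∧ us.map head? = l.map some := by simpa using h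
      obtain ⟨u', rfl⟩ := head?_eq_some_iff.1 hu
      exact ((ih hus).trans (sublist_append_right u' _)).cons_cons x

theorem isChain_gt_heads_of_isChain_gt [LT α] (h : us.map head? = l.map some)
    (hus : us.IsChain (· > ·)) (hdisj : us.Pairwise Disjoint) : l.IsChain (· > ·) := by
  have hheads : (us.map head?).IsChain (· > ·) := (isChain_map head?).2 <|
    hus.imp_of_pairwise (fun _ _ hlt hd => head?_lt_head?_of_lt hlt hd.symm) hdisj
  rw [h, isChain_map] at hheads
  exact hheads.imp fun _ _ => Option.some_lt_some.1

theorem isChain_gt_of_isChain_gt_heads [LT α] (h : us.map head? = l.map some)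
    (hl : l.IsChain (· > ·)) : us.IsChain (· > ·) :=
  isChain_of_isChain_map (S := (· > ·)) head? (fun _ _ => lt_of_head?_lt) <|
    h ▸ (isChain_map (R := (· > ·)) some).2 (hl.imp fun _ _ hlt => Option.some_lt_some.2 hlt)

end Heads

theorem ofFn_sublist_finRange {m n : ℕ} {f : Fin m → Fin n} (hf : StrictMono f) :
    ofFn f <+ finRange n :=
  sublist_of_subperm_of_pairwise (r := (· < ·))
    (subperm_of_subset hf.sortedLT_ofFn.nodup fun i _ => mem_finRange i)
    hf.sortedLT_ofFn.pairwise (sortedLT_finRange n).pairwise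

theorem exists_sublist_ofFn_iff {m n : ℕ} (g : Fin n → α) (P : List α → Prop) :
    (∃ l, l <+ ofFn g ∧ l.length = m ∧ P l) ↔
      ∃ f : Fin m → Fin n, StrictMono f ∧ P (ofFn (g ∘ f)) := by
  constructor
  · rintro ⟨_, hl, hm, hP⟩
    obtain ⟨l', hl', rfl⟩ := sublist_map_iff.1 (ofFn_eq_map (f := g) ▸ hl)
    rw [length_map] at hm
    subst hm
    have hsorted : l'.Pairwise (· < ·) := (sortedLT_finRange n).pairwise.sublist hl'
    refine ⟨fun i => l'[i.val], ?_, ?_⟩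
    · rw [← sortedLT_ofFn_iff, ofFn_getElem]
      exact hsorted.sortedLT
    · rwa [← map_ofFn, ofFn_getElem]
  · rintro ⟨f, hf, hP⟩
    refine ⟨ofFn (g ∘ f), ?_, length_ofFn, hP⟩
    rw [← map_ofFn, ofFn_eq_map (f := g)]
    exact (ofFn_sublist_finRange hf).map g

end List

section Divisibility

open List

variable {α : Type*} [LT α] {m : ℕ} {W : List α}

theorem isMDivisible_of_sublist {l : List α} (hl : l <+ W) (hlen : l.length = m)
    (hdec : l.IsChain (· > ·)) : IsMDivisible m W := by
  obtain ⟨v, us, rfl, h⟩ := hl.exists_eq_append_flatten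
  exact ⟨v, us, by simpa [hlen] using congrArg List.length h,
    fun _ => ne_nil_of_map_head?_eq_map_some h, rfl,
    isChain_gt_of_isChain_gt_heads h hdec⟩

theorem IsMDivisible.exists_sublist (hW : W.Nodup) (h : IsMDivisible m W) :
    ∃ l, l <+ W ∧ l.length = m ∧ l.IsChain (· > ·) := by
  obtain ⟨v, us, rfl, hne, rfl, hdec⟩ := h
  obtain ⟨l, hl⟩ := exists_map_head?_eq_map_some hne
  exact ⟨l, (sublist_flatten_of_map_head?_eq_map_some hl).trans (sublist_append_right v _),
    by simpa using (congrArg List.length hl).symm,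
    isChain_gt_heads_of_isChain_gt hl hdec (nodup_flatten.1 hW.of_append_right).2⟩

theorem isMDivisible_iff_exists_sublist (hW : W.Nodup) :
    IsMDivisible m W ↔ ∃ l, l <+ W ∧ l.length = m ∧ l.IsChain (· > ·) :=
  ⟨IsMDivisible.exists_sublist hW, fun ⟨_, hl, hlen, hdec⟩ => isMDivisible_of_sublist hl hlen hdec⟩

end Divisibility

/-- A permutation `π` of `{1,…,n}`, viewed as the word `π(1)π(2)⋯π(n)`, is not
`m`-divisible iff it has no decreasing subsequence of length `m`
(i.e. it avoids the pattern `m(m-1)⋯1`). -/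
theorem stmt_5 (n m : ℕ) (π : Equiv.Perm (Fin n)) :
    (¬ IsMDivisible m (List.ofFn fun i => π i)) ↔
      ¬ ∃ f : Fin m → Fin n, StrictMono f ∧ StrictAnti (fun a => π (f a)) := by
  rw [not_iff_not, isMDivisible_iff_exists_sublist (List.nodup_ofFn.2 π.injective),
    List.exists_sublist_ofFn_iff]
  refine exists_congr fun f => and_congr_right fun _ => ?_
  rw [← List.sortedGT_ofFn_iff, List.sortedGT_iff_isChain]
  rfl
end

section
/- The number of permutations of {1, ..., n} that contain no decreasing subsequence of length 3 (equivalently, avoid the pattern 321) equals the n-th Catalan number (2n)! / (n!·(n+1)!). -/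
/-!
A permutation avoids `321` exactly when the values at its excedances (`i < π i`) increase and so do
the remaining values. It is then determined by its set `A` of excedance positions and its set `B`
of excedance values, and the pairs that occur are those with `#A = #B` and
`#{b ∈ B | b ≤ x} ≤ #{a ∈ A | a < x}` for every `x`. Writing, for `m = 0, 1, …`, a down step
if `m ∈ B` (an up step otherwise) followed by an up step if `m ∈ A` (a down step otherwise)
turns these pairs into the Dyck words of semilength `n`, which are counted by the Catalan
numbers.
-/

open Equiv Finset DyckStep

section Avoids321

variable {α : Type*} [LinearOrder α]

def Avoids321 (π : Perm α) : Prop :=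
  ¬ ∃ i j k, i < j ∧ j < k ∧ π j < π i ∧ π k < π j

theorem Avoids321.orderDual {π : Perm α} (hπ : Avoids321 π) : Avoids321 (α := αᵒᵈ) π :=
  fun ⟨i, j, k, hij, hjk, hji, hkj⟩ => hπ ⟨k, j, i, hjk, hij, hkj, hji⟩

theorem avoids321_of_strictMonoOn {π : Perm α} {A : Set α} (hA : StrictMonoOn π A)
    (hAc : StrictMonoOn π Aᶜ) : Avoids321 π := by
  have split : ∀ {x y}, x < y → π y < π x → (x ∈ A ↔ y ∉ A) := fun hxy hyx =>
    ⟨fun hx hy => (hA hx hy hxy).not_gt hyx,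
      fun hy => by_contra fun hx => (hAc hx hy hxy).not_gt hyx⟩
  rintro ⟨i, j, k, hij, hjk, hji, hkj⟩
  have := split hij hji
  have := split hjk hkj
  have := split (hij.trans hjk) (hkj.trans hji)
  tauto

end Avoids321

section OrderEmbOfFin

variable {α β : Type*} [LinearOrder α] [LinearOrder β]

theorem Finset.mapsTo_and_strictMonoOn_of_apply_orderEmbOfFin {f : α → β} {S : Finset α}
    {T : Finset β} (h : #T = #S) (hf : ∀ r, f (S.orderEmbOfFin rfl r) = T.orderEmbOfFin h r) :
    Set.MapsTo f S T ∧ StrictMonoOn f S := by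
  have hS : ∀ x ∈ S, ∃ r, S.orderEmbOfFin rfl r = x := fun x hx =>
    Set.mem_range.1 ((Set.ext_iff.1 (S.range_orderEmbOfFin rfl) x).2 hx)
  constructor
  · intro x hx
    obtain ⟨r, rfl⟩ := hS x hx
    simp [hf]
  · intro x hx y hy hxy
    obtain ⟨r, rfl⟩ := hS x hx
    obtain ⟨s, rfl⟩ := hS y hy
    simpa [hf] using hxy

theorem Finset.apply_orderEmbOfFin_of_strictMonoOn {f : α → β} {S : Finset α} {T : Finset β}
    (h : #T = #S) (hmaps : Set.MapsTo f S T) (hmono : StrictMonoOn f S) (r : Fin #S) :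
    f (S.orderEmbOfFin rfl r) = T.orderEmbOfFin h r :=
  congrFun (orderEmbOfFin_unique h (fun r => hmaps (S.orderEmbOfFin_mem rfl r))
    fun _ _ hrs => hmono (S.orderEmbOfFin_mem rfl _) (S.orderEmbOfFin_mem rfl _)
      ((S.orderEmbOfFin rfl).strictMono hrs)) r

end OrderEmbOfFin

section IsExcedancePair

variable {α : Type*} [LinearOrder α]

def IsExcedancePair (A B : Finset α) : Prop :=
  #B = #A ∧ ∀ x, #{b ∈ B | b ≤ x} ≤ #{a ∈ A | a < x}

theorem IsExcedancePair.lt_apply_of_mem {A B : Finset α} (hAB : IsExcedancePair A B)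
    {σ : α → α} (hmaps : Set.MapsTo σ A B) (hmono : StrictMonoOn σ A) {i : α} (hi : i ∈ A) :
    i < σ i := by
  by_contra! hle
  have hlt : #{a ∈ A | a < i} < #{a ∈ A | a ≤ i} :=
    card_lt_card ⟨monotone_filter_right _ fun _ _ => le_of_lt,
      fun h => by simpa using h (mem_filter.2 ⟨hi, le_rfl⟩)⟩
  have hle' : #{a ∈ A | a ≤ i} ≤ #{b ∈ B | b ≤ i} := by
    refine card_le_card_of_injOn σ (fun a ha => ?_) (hmono.injOn.mono fun a ha => ?_)
    · simp only [mem_coe, mem_filter] at ha ⊢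
      exact ⟨hmaps ha.1, (hmono.monotoneOn ha.1 hi ha.2).trans hle⟩
    · exact (mem_filter.1 ha).1
  exact (hlt.trans_le (hle'.trans (hAB.2 i))).false

end IsExcedancePair

section Fintype

variable {α : Type*} [LinearOrder α] [Fintype α]

theorem Finset.card_filter_add_card_filter_compl (s : Finset α) (p : α → Prop) [DecidablePred p] :
    #(s.filter p) + #(sᶜ.filter p) = #(univ.filter p) := by
  rw [← card_union_of_disjoint (disjoint_filter_filter disjoint_compl_right), ← filter_union,
    union_compl]

theorem Finset.card_filter_le_eq_card_filter_lt_add_one (i : α) :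
    #({x | x ≤ i} : Finset α) = #({x | x < i} : Finset α) + 1 := by
  rw [← card_insert_of_notMem (a := i) (s := ({x | x < i} : Finset α)) (by simp)]
  congr 1
  ext x
  simp [le_iff_lt_or_eq, or_comm]

theorem Finset.card_compl_eq_card_compl {A B : Finset α} (h : #B = #A) : #Bᶜ = #Aᶜ := by
  rw [card_compl, card_compl, h]

theorem Avoids321.apply_lt_apply_of_le_apply {π : Perm α} (hπ : Avoids321 π) {i j : α}
    (hij : i < j) (hj : j ≤ π j) : π i < π j := by
  by_contra! hji
  replace hji : π j < π i := hji.lt_of_ne (π.injective.ne hij.ne')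
  -- more positions carry a value below `π j` than there are positions left of `j` other than `i`
  have hcard : #(({x | x < j} : Finset α).erase i) < #({k | π k < π j} : Finset α) :=
    calc #(({x | x < j} : Finset α).erase i) < #({x | x < j} : Finset α) :=
          card_erase_lt_of_mem (by simpa using hij)
      _ ≤ #({v | v < π j} : Finset α) :=
          card_le_card (monotone_filter_right _ fun _ _ h => h.trans_le hj)
      _ = #({k | π k < π j} : Finset α) := card_equiv π.symm (by simp)
  obtain ⟨k, hk, hk'⟩ := exists_mem_notMem_of_card_lt_card hcard
  simp only [mem_filter, mem_univ, true_and, mem_erase, not_and, not_lt] at hk hk'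
  have hki : k ≠ i := by rintro rfl; exact hji.not_gt hk
  exact hπ ⟨i, j, k, hij, (hk' hki).lt_of_ne (by rintro rfl; exact hk.false), hji, hk⟩

-- In `αᵒᵈ` the hypothesis `π i ≤ i` says that `i` is a weak excedance.
theorem Avoids321.apply_lt_apply_of_apply_le {π : Perm α} (hπ : Avoids321 π) {i j : α}
    (hij : i < j) (hi : π i ≤ i) : π i < π j :=
  hπ.orderDual.apply_lt_apply_of_le_apply (i := j) (j := i) hij hi

/-- The permutation mapping `A` increasingly onto `B` and `Aᶜ` increasingly onto `Bᶜ`. -/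
def mergePerm (A B : Finset α) (hB : #B = #A) : Perm α :=
  (finSumEquivOfFinset rfl rfl).symm.trans (finSumEquivOfFinset hB (card_compl_eq_card_compl hB))

section MergePerm

variable {A B : Finset α} {hB : #B = #A}

theorem mergePerm_finSumEquivOfFinset (s : Fin #A ⊕ Fin #Aᶜ) :
    mergePerm A B hB (finSumEquivOfFinset rfl rfl s) =
      finSumEquivOfFinset hB (card_compl_eq_card_compl hB) s := by
  simp [mergePerm]

theorem mapsTo_and_strictMonoOn_mergePerm :
    Set.MapsTo (mergePerm A B hB) A B ∧ StrictMonoOn (mergePerm A B hB) A :=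
  mapsTo_and_strictMonoOn_of_apply_orderEmbOfFin hB fun r =>
    mergePerm_finSumEquivOfFinset (.inl r)

theorem mapsTo_and_strictMonoOn_compl_mergePerm :
    Set.MapsTo (mergePerm A B hB) ↑Aᶜ ↑Bᶜ ∧ StrictMonoOn (mergePerm A B hB) ↑Aᶜ :=
  mapsTo_and_strictMonoOn_of_apply_orderEmbOfFin (card_compl_eq_card_compl hB) fun r =>
    mergePerm_finSumEquivOfFinset (.inr r)

theorem eq_mergePerm {σ : Perm α} (hmaps : Set.MapsTo σ A B) (hmono : StrictMonoOn σ A)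
    (hmaps' : Set.MapsTo σ ↑Aᶜ ↑Bᶜ) (hmono' : StrictMonoOn σ ↑Aᶜ) : σ = mergePerm A B hB := by
  ext x
  obtain ⟨s, rfl⟩ := (finSumEquivOfFinset (s := A) rfl rfl).surjective x
  rw [mergePerm_finSumEquivOfFinset]
  cases s with
  | inl r => exact apply_orderEmbOfFin_of_strictMonoOn hB hmaps hmono r
  | inr r =>
    exact apply_orderEmbOfFin_of_strictMonoOn (card_compl_eq_card_compl hB) hmaps' hmono' r

theorem avoids321_mergePerm : Avoids321 (mergePerm A B hB) :=
  avoids321_of_strictMonoOn mapsTo_and_strictMonoOn_mergePerm.2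
    (by simpa using mapsTo_and_strictMonoOn_compl_mergePerm.2)

end MergePerm

def excedances (π : Perm α) : Finset α := {i | i < π i}

theorem isExcedancePair_excedances (π : Perm α) :
    IsExcedancePair (excedances π) ((excedances π).map π.toEmbedding) := by
  refine ⟨card_map _, fun x => card_le_card_of_injOn π.symm (fun b hb => ?_)
    π.symm.injective.injOn⟩
  simp only [excedances, mem_coe, mem_filter, mem_map_equiv, mem_univ, true_and,
    apply_symm_apply] at hb ⊢
  exact ⟨hb.1, hb.1.trans_le hb.2⟩

theorem Avoids321.eq_mergePerm_excedances {π : Perm α} (hπ : Avoids321 π) :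
    π = mergePerm (excedances π) ((excedances π).map π.toEmbedding) (card_map _) := by
  refine eq_mergePerm (fun i hi => mem_map_of_mem _ hi) (fun i hi j hj hij => ?_)
    (fun i hi => by simpa using hi) (fun i hi j hj hij => ?_)
  · exact hπ.apply_lt_apply_of_le_apply hij (by simp [excedances] at hj; exact hj.le)
  · exact hπ.apply_lt_apply_of_apply_le hij (by simpa [excedances] using hi)

namespace IsExcedancePair

variable {A B : Finset α} (hAB : IsExcedancePair A B)
include hAB

theorem apply_le_of_notMem {σ : Perm α} (hmaps : Set.MapsTo σ A B)
    (hmono : StrictMonoOn σ ↑Aᶜ) {i : α} (hi : i ∉ A) : σ i ≤ i := by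
  by_contra! hlt
  have hcompl : #{c ∈ Bᶜ | c ≤ i} ≤ #{a ∈ Aᶜ | a < i} := by
    refine card_le_card_of_injOn σ.symm (fun c hc => ?_) σ.symm.injective.injOn
    simp only [mem_coe, mem_filter, mem_compl] at hc ⊢
    have ha : σ.symm c ∉ A := fun ha => hc.1 (by simpa using hmaps ha)
    refine ⟨ha, (hmono.lt_iff_lt (by simpa using ha) (by simpa using hi)).1 ?_⟩
    simpa using hc.2.trans_lt hlt
  have hB := card_filter_add_card_filter_compl B (· ≤ i)
  have hA := card_filter_add_card_filter_compl A (· < i)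
  have := card_filter_le_eq_card_filter_lt_add_one i
  have := hAB.2 i
  omega

theorem excedances_mergePerm : excedances (mergePerm A B hAB.1) = A := by
  obtain ⟨hmaps, hmono⟩ := mapsTo_and_strictMonoOn_mergePerm (hB := hAB.1)
  ext i
  simp only [excedances, mem_filter, mem_univ, true_and]
  refine ⟨fun hi => by_contra fun hA => ?_, hAB.lt_apply_of_mem hmaps hmono⟩
  exact (hAB.apply_le_of_notMem hmaps mapsTo_and_strictMonoOn_compl_mergePerm.2 hA).not_gt hi

theorem map_excedances_mergePerm :
    (excedances (mergePerm A B hAB.1)).map (mergePerm A B hAB.1).toEmbedding = B := by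
  rw [hAB.excedances_mergePerm]
  refine eq_of_subset_of_card_le (fun b hb => ?_) (by rw [card_map, hAB.1])
  obtain ⟨a, ha, rfl⟩ := mem_map.1 hb
  exact mapsTo_and_strictMonoOn_mergePerm.1 ha

end IsExcedancePair

end Fintype

def avoids321EquivExcedancePair (α : Type*) [LinearOrder α] [Fintype α] :
    {π : Perm α // Avoids321 π} ≃ {p : Finset α × Finset α // IsExcedancePair p.1 p.2} where
  toFun π := ⟨(excedances π.1, (excedances π.1).map π.1.toEmbedding),
    isExcedancePair_excedances π.1⟩
  invFun p := ⟨mergePerm p.1.1 p.1.2 p.2.1, avoids321_mergePerm⟩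
  left_inv π := Subtype.ext π.2.eq_mergePerm_excedances.symm
  right_inv p :=
    Subtype.ext (Prod.ext p.2.excedances_mergePerm p.2.map_excedances_mergePerm)

theorem Finset.card_filter_lt_add_one (S : Finset ℕ) (m : ℕ) :
    #{s ∈ S | s < m + 1} = #{s ∈ S | s < m} + if m ∈ S then 1 else 0 := by
  have : {s ∈ S | s < m + 1} = {s ∈ S | s < m} ∪ {s ∈ S | s = m} := by
    ext s
    simp [le_iff_lt_or_eq, and_or_left]
  rw [this, card_union_of_disjoint (disjoint_filter.2 fun _ _ h => h.ne), filter_eq']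
  split_ifs <;> simp

theorem Fin.mem_map_valEmbedding {n : ℕ} {A : Finset (Fin n)} {m : ℕ} (hm : m < n) :
    m ∈ A.map Fin.valEmbedding ↔ (⟨m, hm⟩ : Fin n) ∈ A :=
  ⟨fun h => by obtain ⟨t, ht, rfl⟩ := mem_map.1 h; exact ht, mem_map_of_mem Fin.valEmbedding⟩

theorem Fin.card_filter_map_valEmbedding_lt {n : ℕ} (A : Finset (Fin n)) (m : ℕ) :
    #{s ∈ A.map Fin.valEmbedding | s < m} = #{a ∈ A | (a : Fin n).val < m} := by
  rw [filter_map, card_map]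
  rfl

/-- After `2 * m` steps the height is `2 * (#{a ∈ A | a < m} - #{b ∈ B | b < m})`. -/
def excedanceWord (A B : Finset ℕ) : ℕ → List DyckStep
  | 0 => []
  | m + 1 => excedanceWord A B m ++ [if m ∈ B then D else U, if m ∈ A then U else D]

namespace excedanceWord

variable {A B : Finset ℕ}

theorem length (m : ℕ) : (excedanceWord A B m).length = 2 * m := by
  induction m with
  | zero => rfl
  | succ m ih => simp [excedanceWord, ih]; ring

theorem isPrefix {m k : ℕ} (h : m ≤ k) : excedanceWord A B m <+: excedanceWord A B k := by
  induction k, h using Nat.le_induction with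
  | base => exact List.prefix_refl _
  | succ k _ ih => exact ih.trans (List.prefix_append _ _)

theorem take_two_mul (m k : ℕ) :
    (excedanceWord A B k).take (2 * m) = excedanceWord A B (min m k) := by
  rcases le_total m k with h | h
  · rw [min_eq_left h, List.prefix_iff_eq_take.1 (isPrefix h), length]
  · rw [min_eq_right h, List.take_of_length_le (by rw [length]; omega)]

theorem take_two_mul_add_one {m k : ℕ} (h : m < k) :
    (excedanceWord A B k).take (2 * m + 1) =
      excedanceWord A B m ++ [if m ∈ B then D else U] := by
  have := take_two_mul (A := A) (B := B) (m + 1) k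
  rw [min_eq_left h] at this
  rw [← min_eq_left (show 2 * m + 1 ≤ 2 * (m + 1) by omega), ← List.take_take, this,
    excedanceWord, List.take_append]
  simp [length]

theorem getElem?_two_mul {m k : ℕ} (h : m < k) :
    (excedanceWord A B k)[2 * m]? = some (if m ∈ B then D else U) := by
  rw [← List.getElem?_take_of_lt (j := 2 * m + 1) (by omega), take_two_mul_add_one h,
    List.getElem?_append_right (by rw [length])]
  simp [length]

theorem getElem?_two_mul_add_one {m k : ℕ} (h : m < k) :
    (excedanceWord A B k)[2 * m + 1]? = some (if m ∈ A then U else D) := by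
  rw [← List.getElem?_take_of_lt (j := 2 * (m + 1)) (by omega), take_two_mul, min_eq_left h,
    excedanceWord, List.getElem?_append_right (by rw [length]; omega)]
  simp [length]

theorem count_U (m : ℕ) :
    (excedanceWord A B m).count U + #{b ∈ B | b < m} = m + #{a ∈ A | a < m} := by
  induction m with
  | zero => simp [excedanceWord]
  | succ m ih =>
    rw [excedanceWord, card_filter_lt_add_one, card_filter_lt_add_one]
    split_ifs <;> simp_all <;> omega

theorem count_D (m : ℕ) :
    (excedanceWord A B m).count D + #{a ∈ A | a < m} = m + #{b ∈ B | b < m} := by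
  induction m with
  | zero => simp [excedanceWord]
  | succ m ih =>
    rw [excedanceWord, card_filter_lt_add_one, card_filter_lt_add_one]
    split_ifs <;> simp_all <;> omega

theorem count_D_le_count_U_iff (m : ℕ) :
    (excedanceWord A B m).count D ≤ (excedanceWord A B m).count U ↔
      #{b ∈ B | b < m} ≤ #{a ∈ A | a < m} := by
  have := count_U (A := A) (B := B) m
  have := count_D (A := A) (B := B) m
  omega

theorem count_D_le_count_U_take_iff {n : ℕ} :
    (∀ i, ((excedanceWord A B n).take i).count D ≤ ((excedanceWord A B n).take i).count U) ↔
      ∀ m < n, #{b ∈ B | b < m + 1} ≤ #{a ∈ A | a < m} := by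
  constructor
  · intro h m hm
    have hodd := h (2 * m + 1)
    have heven := h (2 * m)
    rw [take_two_mul_add_one hm] at hodd
    rw [take_two_mul, min_eq_left hm.le, count_D_le_count_U_iff] at heven
    have := count_U (A := A) (B := B) m
    have := count_D (A := A) (B := B) m
    rw [card_filter_lt_add_one]
    split_ifs at hodd ⊢ <;> simp at hodd <;> omega
  · intro h i
    have heven : ∀ m ≤ n, #{b ∈ B | b < m} ≤ #{a ∈ A | a < m} := by
      rintro (_ | m) hm
      · simp
      · exact (h m hm).trans (card_le_card (monotone_filter_right _ fun _ _ => Nat.lt_succ_of_lt))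
    obtain ⟨m, rfl | rfl⟩ := Nat.even_or_odd' i
    · rw [take_two_mul, count_D_le_count_U_iff]
      exact heven _ (min_le_right _ _)
    · rcases lt_or_ge m n with hm | hm
      · have := count_U (A := A) (B := B) m
        have := count_D (A := A) (B := B) m
        have := heven m hm.le
        have := h m hm
        rw [card_filter_lt_add_one] at this
        rw [take_two_mul_add_one hm]
        split_ifs at this ⊢ <;> simp <;> omega
      · rw [List.take_of_length_le (by rw [length]; omega), count_D_le_count_U_iff]
        exact heven n le_rfl

theorem eq_of_length_eq {l : List DyckStep} {n : ℕ} (hl : l.length = 2 * n) :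
    excedanceWord (({t : Fin n | l[2 * t.val + 1]? = some U} : Finset (Fin n)).map Fin.valEmbedding)
      (({t : Fin n | l[2 * t.val]? = some D} : Finset (Fin n)).map Fin.valEmbedding) n = l := by
  refine List.ext_getElem? fun i => ?_
  obtain ⟨m, rfl | rfl⟩ := Nat.even_or_odd' i <;> rcases lt_or_ge m n with hm | hm
  · simp only [getElem?_two_mul hm, Fin.mem_map_valEmbedding hm, mem_filter, mem_univ, true_and,
      List.getElem?_eq_getElem (show 2 * m < l.length by omega)]
    cases l[2 * m] <;> simp
  · rw [List.getElem?_eq_none (by rw [length]; omega), List.getElem?_eq_none (by omega)]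
  · simp only [getElem?_two_mul_add_one hm, Fin.mem_map_valEmbedding hm, mem_filter, mem_univ,
      true_and, List.getElem?_eq_getElem (show 2 * m + 1 < l.length by omega)]
    cases l[2 * m + 1] <;> simp
  · rw [List.getElem?_eq_none (by rw [length]; omega), List.getElem?_eq_none (by omega)]

end excedanceWord

section DyckWord

variable {n : ℕ}

theorem isExcedancePair_iff_excedanceWord {A B : Finset (Fin n)} :
    IsExcedancePair A B ↔
      (excedanceWord (A.map Fin.valEmbedding) (B.map Fin.valEmbedding) n).count U =
        (excedanceWord (A.map Fin.valEmbedding) (B.map Fin.valEmbedding) n).count D ∧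
      ∀ i, ((excedanceWord (A.map Fin.valEmbedding) (B.map Fin.valEmbedding) n).take i).count D ≤
        ((excedanceWord (A.map Fin.valEmbedding) (B.map Fin.valEmbedding) n).take i).count U := by
  rw [excedanceWord.count_D_le_count_U_take_iff]
  have hU := excedanceWord.count_U (A := A.map Fin.valEmbedding) (B := B.map Fin.valEmbedding) n
  have hD := excedanceWord.count_D (A := A.map Fin.valEmbedding) (B := B.map Fin.valEmbedding) n
  simp only [Fin.card_filter_map_valEmbedding_lt] at hU hD ⊢
  rw [filter_true_of_mem fun a _ => a.is_lt, filter_true_of_mem fun a _ => a.is_lt] at hU hD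
  refine and_congr ⟨fun h => by omega, fun h => by omega⟩ ?_
  simp only [Fin.forall_iff, Fin.le_def, Fin.lt_def, Nat.lt_succ_iff]

def IsExcedancePair.dyckWord {A B : Finset (Fin n)} (h : IsExcedancePair A B) : DyckWord :=
  ⟨_, (isExcedancePair_iff_excedanceWord.1 h).1, (isExcedancePair_iff_excedanceWord.1 h).2⟩

theorem IsExcedancePair.toList_dyckWord {A B : Finset (Fin n)} (h : IsExcedancePair A B) :
    h.dyckWord.toList = excedanceWord (A.map Fin.valEmbedding) (B.map Fin.valEmbedding) n :=
  rfl

theorem IsExcedancePair.semilength_dyckWord {A B : Finset (Fin n)} (h : IsExcedancePair A B) :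
    h.dyckWord.semilength = n := by
  have := h.dyckWord.two_mul_semilength_eq_length
  rw [h.toList_dyckWord, excedanceWord.length] at this
  omega

def excedancePairEquivDyckWord :
    {p : Finset (Fin n) × Finset (Fin n) // IsExcedancePair p.1 p.2} ≃
      {w : DyckWord // w.semilength = n} where
  toFun p := ⟨p.2.dyckWord, p.2.semilength_dyckWord⟩
  invFun w := ⟨(({t : Fin n | w.1.toList[2 * t.val + 1]? = some U} : Finset (Fin n)),
      ({t : Fin n | w.1.toList[2 * t.val]? = some D} : Finset (Fin n))),
    isExcedancePair_iff_excedanceWord.2 (by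
      rw [excedanceWord.eq_of_length_eq (by rw [← w.1.two_mul_semilength_eq_length, w.2])]
      exact ⟨w.1.count_U_eq_count_D, w.1.count_D_le_count_U⟩)⟩
  left_inv p := by
    refine Subtype.ext (Prod.ext ?_ ?_) <;> ext t <;>
      dsimp only <;> rw [mem_filter, IsExcedancePair.toList_dyckWord] <;>
      simp [excedanceWord.getElem?_two_mul t.is_lt, excedanceWord.getElem?_two_mul_add_one t.is_lt,
        Fin.mem_map_valEmbedding t.is_lt]
  right_inv w := by
    refine Subtype.ext (DyckWord.ext ?_)
    exact excedanceWord.eq_of_length_eq (by rw [← w.1.two_mul_semilength_eq_length, w.2])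

end DyckWord

theorem catalan_eq_factorial_div (n : ℕ) :
    catalan n = (2 * n).factorial / (n.factorial * (n + 1).factorial) := by
  rw [catalan_eq_centralBinom_div, Nat.centralBinom_eq_two_mul_choose,
    Nat.choose_eq_factorial_div_factorial (by omega), Nat.div_div_eq_div_mul, two_mul,
    Nat.add_sub_cancel, Nat.factorial_succ]
  congr 1
  ring

/-- The number of permutations of `{1,…,n}` with no decreasing subsequence of
length 3 (i.e. avoiding the pattern `321`) equals the `n`-th Catalan number
`(2n)! / (n! (n+1)!)`. -/
theorem stmt_6 (n : ℕ) :
    Nat.card {π : Equiv.Perm (Fin n) //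
        ¬ ∃ i j k : Fin n, i < j ∧ j < k ∧ π j < π i ∧ π k < π j} =
      (2 * n).factorial / (n.factorial * (n + 1).factorial) := by
  rw [← catalan_eq_factorial_div, ← DyckWord.card_dyckWord_semilength_eq_catalan,
    ← Nat.card_eq_fintype_card]
  exact Nat.card_congr ((avoids321EquivExcedancePair (Fin n)).trans excedancePairEquivDyckWord)
end

section
/- Let φ be the Thue–Morse substitution on the alphabet {a, b} given by φ(a) = ab, φ(b) = ba, extended to words by concatenation. If a word w contains no cube (no nonempty factor of the form uuu), then φ(w) contains no cube. -/
/-!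
The image `φ(w)` is a concatenation of blocks `ab`, `ba`, so a factor of even length that starts
at an even position is the image of a factor of `w`; as `φ` is injective, an even cube `uuu` at
an even position pulls back to a cube of `w`. An even cube at an odd position can be shifted one
letter to the left: the letter before it and the last letter of `u` both precede the first
letter of `u` at an even position, so both are its complement. An odd cube cannot occur at all:
one of its two squares starts at an even position, so `uu = φ(v)`. Cutting `φ(v)` at the blocks
covering the middle gives `u = φ(p) y = ȳ φ(q)`, which forces `u` to alternate; having odd
length, it would begin and end with the same letter.
-/

namespace ThueMorse

def φ (w : List Bool) : List Bool := w.flatMap fun x => [x, !x]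

@[simp] lemma φ_nil : φ [] = [] := rfl

@[simp] lemma φ_cons (x : Bool) (w : List Bool) : φ (x :: w) = x :: (!x) :: φ w := rfl

lemma φ_injective : Function.Injective φ := by
  intro v
  induction v with
  | nil => rintro (_ | _) h <;> simp_all
  | cons x v ih =>
    rintro (_ | ⟨y, v'⟩) h
    · simp at h
    · simp only [φ_cons, List.cons.injEq] at h
      rw [h.1, ih h.2.2]

lemma exists_eq_append_of_φ_eq_append {w A s : List Bool} (h : φ w = A ++ s)
    (hA : Even A.length) : ∃ p q, w = p ++ q ∧ φ p = A ∧ φ q = s := by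
  induction w generalizing A with
  | nil => exact ⟨[], [], rfl, by simp_all⟩
  | cons x w ih =>
    rcases A with _ | ⟨a, _ | ⟨b, A⟩⟩
    · exact ⟨[], x :: w, rfl, rfl, h⟩
    · simp at hA
    · simp only [φ_cons, List.cons_append, List.cons.injEq] at h
      obtain ⟨rfl, rfl, h⟩ := h
      obtain ⟨p, q, rfl, rfl, hq⟩ := ih h (by simpa [parity_simps] using hA)
      exact ⟨x :: p, q, rfl, rfl, hq⟩

lemma eq_not_of_φ_eq_append_cons_cons {w A B : List Bool} {c d : Bool}
    (h : φ w = A ++ c :: d :: B) (hA : Even A.length) : d = !c := by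
  obtain ⟨_, _ | ⟨x, q⟩, -, -, hq⟩ := exists_eq_append_of_φ_eq_append h hA
  · simp at hq
  · simp only [φ_cons, List.cons.injEq] at hq
    rw [← hq.1, hq.2.1]

lemma exists_infix_of_φ_eq {w A s B : List Bool} (h : φ w = A ++ s ++ B)
    (hA : Even A.length) (hs : Even s.length) : ∃ v, v <:+: w ∧ φ v = s := by
  obtain ⟨p, q, rfl, -, hq⟩ :=
    exists_eq_append_of_φ_eq_append (h.trans (List.append_assoc A s B)) hA
  obtain ⟨v, r, rfl, hv, -⟩ := exists_eq_append_of_φ_eq_append hq hs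
  exact ⟨v, ⟨p, r, List.append_assoc _ _ _⟩, hv⟩

lemma exists_eq_cube_of_φ_eq_cube {v u : List Bool} (h : φ v = u ++ u ++ u)
    (hu : Even u.length) : ∃ x, v = x ++ x ++ x ∧ φ x = u := by
  obtain ⟨x, v', rfl, hx, hv'⟩ :=
    exists_eq_append_of_φ_eq_append (h.trans (List.append_assoc u u u)) hu
  obtain ⟨y, z, rfl, hy, hz⟩ := exists_eq_append_of_φ_eq_append hv' hu
  obtain rfl := φ_injective (hx.trans hy.symm)
  obtain rfl := φ_injective (hx.trans hz.symm)
  exact ⟨x, (List.append_assoc _ _ _).symm, hx⟩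

lemma exists_cube_infix_of_φ_eq_of_even {w A u B : List Bool} (h : φ w = A ++ (u ++ u ++ u) ++ B)
    (hA : Even A.length) (hu : Even u.length) (hne : u ≠ []) :
    ∃ x, x ≠ [] ∧ (x ++ x ++ x) <:+: w := by
  obtain ⟨v, hvw, hv⟩ := exists_infix_of_φ_eq h hA (by simpa [parity_simps] using hu)
  obtain ⟨x, rfl, hx⟩ := exists_eq_cube_of_φ_eq_cube hv hu
  exact ⟨x, by rintro rfl; exact hne hx.symm, hvw⟩

lemma exists_cube_infix_of_φ_eq {w A u B : List Bool} (h : φ w = A ++ (u ++ u ++ u) ++ B)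
    (hu : Even u.length) (hne : u ≠ []) : ∃ x, x ≠ [] ∧ (x ++ x ++ x) <:+: w := by
  rcases Nat.even_or_odd A.length with hA | hA
  · exact exists_cube_infix_of_φ_eq_of_even h hA hu hne
  obtain rfl | ⟨L, c, rfl⟩ := A.eq_nil_or_concat'
  · simp at hA
  obtain rfl | ⟨s, d, rfl⟩ := u.eq_nil_or_concat'
  · exact absurd rfl hne
  obtain _ | ⟨y, t⟩ := s
  · simp at hu
  have hL : Even L.length := by simpa [parity_simps] using hA
  have hyc : y = !c :=
    eq_not_of_φ_eq_append_cons_cons (A := L) (h.trans (by simp; rfl)) hL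
  have hyd : y = !d :=
    eq_not_of_φ_eq_append_cons_cons (A := L ++ c :: y :: t) (h.trans (by simp; rfl))
      (by simp [parity_simps] at hu ⊢; tauto)
  obtain rfl : c = d := by simpa [hyd] using hyc.symm
  exact exists_cube_infix_of_φ_eq_of_even (A := L) (u := c :: y :: t) (B := c :: B)
    (h.trans (by simp)) hL (by simpa [parity_simps] using hu) (List.cons_ne_nil _ _)

lemma φ_append_singleton_ne_not_cons_φ (p q : List Bool) (y : Bool) :
    φ p ++ [y] ≠ (!y) :: φ q := by
  induction p generalizing q with
  | nil => rcases q with _ | _ <;> cases y <;> simp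
  | cons x p ih =>
    rcases q with _ | ⟨z, q⟩
    · simp
    · simp only [φ_cons, List.cons_append, ne_eq, List.cons.injEq, not_and]
      rintro rfl rfl
      simpa using ih q

lemma φ_ne_append_self_of_odd {v u : List Bool} (hu : Odd u.length) : φ v ≠ u ++ u := by
  intro h
  obtain rfl | ⟨s, y, rfl⟩ := u.eq_nil_or_concat'
  · simp at hu
  have hs : Even s.length := by simpa [parity_simps] using hu
  obtain ⟨p, _ | ⟨x, q⟩, -, hp, hq⟩ :=
    exists_eq_append_of_φ_eq_append (s := y :: (s ++ [y])) (h.trans (by simp)) hs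
  · simp at hq
  simp only [φ_cons, List.cons.injEq] at hq
  obtain ⟨rfl, hq⟩ := hq
  exact φ_append_singleton_ne_not_cons_φ p q x (by rw [hp, hq])

lemma φ_ne_cube_append_of_odd {w A u B : List Bool} (hu : Odd u.length) :
    φ w ≠ A ++ (u ++ u ++ u) ++ B := by
  intro h
  rcases Nat.even_or_odd A.length with hA | hA
  · obtain ⟨v, -, hv⟩ := exists_infix_of_φ_eq (A := A) (s := u ++ u) (B := u ++ B)
      (h.trans (by simp)) hA (by simp)
    exact φ_ne_append_self_of_odd hu hv
  · obtain ⟨v, -, hv⟩ := exists_infix_of_φ_eq (A := A ++ u) (s := u ++ u) (B := B)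
      (h.trans (by simp))
      (by simpa [parity_simps] using hA.add_odd hu) (by simp)
    exact φ_ne_append_self_of_odd hu hv

end ThueMorse

open ThueMorse in
/-- The Thue–Morse substitution `φ(a) = ab`, `φ(b) = ba` preserves cube-freeness:
if `w` contains no nonempty factor `uuu`, then neither does `φ(w)`. -/
theorem stmt_11 (w : List Bool)
    (h : ¬ ∃ u : List Bool, u ≠ [] ∧ (u ++ u ++ u) <:+: w) :
    ¬ ∃ u : List Bool, u ≠ [] ∧ (u ++ u ++ u) <:+: (w.flatMap fun x => [x, !x]) := by
  rintro ⟨u, hne, A, B, hAB⟩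
  rcases Nat.even_or_odd u.length with hu | hu
  · exact h (exists_cube_infix_of_φ_eq hAB.symm hu hne)
  · exact φ_ne_cube_append_of_odd hu hAB.symm
end

section
/- If in an associative algebra over a field a polynomial identity of degree n holds, then a multilinear admissible identity of degree at most n holds, i.e., an identity of the form x_1 x_2 ⋯ x_m = Σ_{σ ∈ S_m, σ ≠ id} β_σ x_{σ(1)} ⋯ x_{σ(m)} with m ≤ n. -/
/-!
Let `f` be a nonzero identity. Setting `x_i = 0` shows that the words of `f` containing `x_i`
form an identity on their own. If some word of `f` contains `x_i` twice, take a fresh variable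
`x_j` and keep the words of `f(x_i + x_j)` that contain both `x_i` and `x_j`: this is again a
nonzero identity of no larger degree, and each of its words has one more distinct letter than
the word of `f` it comes from. Iterating, all words have distinct letters. Now set the variables
outside a word `w` of minimal length to zero: what is left is a multilinear identity
`∑_σ γ_σ x_{σ(1)} ⋯ x_{σ(m)}` with `m = |w|` and `γ_id ≠ 0`, and dividing by `-γ_id` makes it
admissible. Finally `m > 0`, since a nonzero scalar does not vanish in a nontrivial algebra.
-/

open Function

theorem List.sum_map_prod_sections {α R : Type*} [Semiring R] (x : α → R) (L : List (List α)) :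
    (L.sections.map fun s => (s.map x).prod).sum = (L.map fun l => (l.map x).sum).prod := by
  induction L with
  | nil => simp
  | cons l L ih =>
    rw [List.sections, List.flatMap_def, List.map_flatten, List.sum_flatten, List.map_map,
      List.map_cons, List.prod_cons, ← ih, ← List.sum_map_mul_left]
    simp only [comp_def, List.map_map, List.map_cons, List.prod_cons, List.sum_map_mul_right]

theorem List.nodup_sections {α : Type*} {L : List (List α)} (h : ∀ l ∈ L, l.Nodup) :
    L.sections.Nodup := by
  induction L with
  | nil => simp
  | cons l L ih =>
    rw [List.sections, List.nodup_flatMap]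
    refine ⟨fun s _ => (h l List.mem_cons_self).map fun a b hab => (List.cons.inj hab).1, ?_⟩
    refine (ih fun l' hl' => h l' (List.mem_cons_of_mem _ hl')).imp fun hst => ?_
    simp only [onFun, List.disjoint_left, List.mem_map]
    rintro _ ⟨a, -, rfl⟩ ⟨b, -, hb⟩
    exact hst (List.cons.inj hb).2.symm

theorem List.Perm.exists_ofFn_get_eq {α : Type*} [DecidableEq α] {u w : List α} (h : u.Perm w)
    (hw : w.Nodup) : ∃ σ : Equiv.Perm (Fin w.length), List.ofFn (fun t => w.get (σ t)) = u := by
  let σ : Equiv.Perm (Fin w.length) := (finCongr h.length_eq.symm).trans <|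
    (List.Nodup.getEquiv u (h.nodup_iff.2 hw)).trans <|
      (Equiv.subtypeEquivRight fun _ => h.mem_iff).trans (List.Nodup.getEquiv w hw).symm
  refine ⟨σ, ?_⟩
  have hσ : ∀ t, w.get (σ t) = u.get (Fin.cast h.length_eq.symm t) := fun t => by
    simp [σ]
  simp only [hσ]
  exact (List.ofFn_congr h.length_eq u.get).symm.trans (List.ofFn_get u)

namespace PolyIdentity

variable {F A α : Type*}

section Semiring

variable [CommSemiring F] [Semiring A] [Algebra F A]

noncomputable def eval (x : α → A) : (List α →₀ F) →ₗ[F] A :=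
  Finsupp.linearCombination F fun w => (w.map x).prod

theorem eval_apply (x : α → A) (c : List α →₀ F) :
    eval x c = c.sum fun w a => a • (w.map x).prod :=
  Finsupp.linearCombination_apply _ _

@[simp]
theorem eval_single (x : α → A) (w : List α) (a : F) :
    eval x (Finsupp.single w a) = a • (w.map x).prod :=
  Finsupp.linearCombination_single _ _ _

theorem eval_congr {x y : α → A} {c : List α →₀ F}
    (h : ∀ w ∈ c.support, ∀ k ∈ w, x k = y k) : eval x c = eval y c := by
  rw [eval_apply, eval_apply]
  exact Finsupp.sum_congr fun w hw => by rw [List.map_congr_left (h w hw)]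

theorem eval_filter (x : α → A) (c : List α →₀ F) (p : List α → Prop) [DecidablePred p]
    (h : ∀ w ∈ c.support, ¬ p w → (w.map x).prod = 0) : eval x (c.filter p) = eval x c := by
  have hnot : eval x (c.filter fun w => ¬ p w) = 0 := by
    rw [eval_apply, Finsupp.sum, Finsupp.support_filter]
    refine Finset.sum_eq_zero fun w hw => ?_
    rw [Finset.mem_filter] at hw
    rw [h w hw.1 hw.2, smul_zero]
  conv_rhs => rw [← Finsupp.filter_add_filter_not c p, map_add, hnot, add_zero]

theorem eval_mapDomain_map {β : Type*} (f : α → β) (x : β → A) (c : List α →₀ F) :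
    eval x (c.mapDomain (List.map f)) = eval (x ∘ f) c := by
  simp only [eval, Finsupp.linearCombination_mapDomain, comp_def, List.map_map]

variable (A) in
def IsIdentity (c : List α →₀ F) : Prop := ∀ x : α → A, eval x c = 0

theorem IsIdentity.mapDomain_map {β : Type*} {c : List α →₀ F} (hc : IsIdentity A c)
    (f : α → β) : IsIdentity A (c.mapDomain (List.map f)) := fun x => by
  rw [eval_mapDomain_map, hc]

theorem IsIdentity.filter_mem [DecidableEq α] {c : List α →₀ F} (hc : IsIdentity A c) (i : α) :
    IsIdentity A (c.filter (i ∈ ·)) := fun x => by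
  have hnot : eval x (c.filter (i ∉ ·)) = 0 := by
    rw [eval_congr (y := update x i 0), eval_filter, hc]
    · exact fun w _ hiw => List.prod_eq_zero
        (List.mem_map.2 ⟨i, not_not.1 hiw, update_self _ _ _⟩)
    · intro w hw k hk
      have hiw : i ∉ w := (Finsupp.mem_support_iff.1 hw) ∘ Finsupp.filter_apply_neg _ _ ∘ not_not.2
      rw [update_of_ne (ne_of_mem_of_not_mem hk hiw)]
  have := hc x
  rwa [← Finsupp.filter_add_filter_not c (i ∈ ·), map_add, hnot, add_zero] at this

section Substitution

variable [DecidableEq α]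

/-- The words obtained from `w` by replacing some of the occurrences of `i` by `j`. -/
def splitWords (i j : α) (w : List α) : List (List α) :=
  (w.map fun k => if k = i then [i, j] else [k]).sections

theorem nodup_splitWords {i j : α} (hij : i ≠ j) (w : List α) : (splitWords i j w).Nodup :=
  List.nodup_sections <| by
    simp only [List.mem_map]
    rintro _ ⟨k, -, rfl⟩
    split_ifs <;> simp [hij]

theorem mem_splitWords_iff {i j : α} {w : List α} (hj : j ∉ w) {v : List α} :
    v ∈ splitWords i j w ↔ v.map (update id j i) = w := by
  induction w generalizing v with
  | nil => cases v <;> simp [splitWords]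
  | cons k w ih =>
    rw [List.mem_cons, not_or] at hj
    cases v with
    | nil => simp [splitWords]
    | cons a v =>
      have hk : a ∈ (if k = i then [i, j] else [k]) ↔ update id j i a = k := by
        by_cases ha : a = j <;> split_ifs <;> simp_all [eq_comm]
      simp only [splitWords, List.map_cons, List.sections, List.mem_flatMap, List.mem_map,
        List.cons.injEq] at ih ⊢
      simp only [← hk, ← ih hj.2]
      constructor
      · rintro ⟨s, hs, b, hb, rfl, rfl⟩
        exact ⟨hb, hs⟩
      · rintro ⟨ha, hv⟩
        exact ⟨v, hv, a, ha, rfl, rfl⟩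

theorem prod_map_update_add (x : α → A) {i j : α} (w : List α) :
    (w.map (update x i (x i + x j))).prod =
      ((splitWords i j w).map fun v => (v.map x).prod).sum := by
  rw [splitWords, List.sum_map_prod_sections, List.map_map]
  congr 2
  funext k
  by_cases hk : k = i <;> simp [hk]

noncomputable def substAdd (i j : α) : (List α →₀ F) →ₗ[F] (List α →₀ F) :=
  Finsupp.linearCombination F fun w => ∑ v ∈ (splitWords i j w).toFinset, Finsupp.single v 1

theorem eval_substAdd (x : α → A) {i j : α} (hij : i ≠ j) (c : List α →₀ F) :
    eval x (substAdd i j c) = eval (update x i (x i + x j)) c := by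
  rw [← LinearMap.comp_apply]
  congr 1
  refine Finsupp.lhom_ext fun w a => ?_
  simp [substAdd, List.sum_toFinset _ (nodup_splitWords hij w), prod_map_update_add,
    map_list_sum, comp_def]

theorem IsIdentity.substAdd {c : List α →₀ F} (hc : IsIdentity A c) {i j : α} (hij : i ≠ j) :
    IsIdentity A (substAdd i j c) := fun x => by
  rw [eval_substAdd x hij, hc]

theorem substAdd_apply {i j : α} {c : List α →₀ F} (hj : ∀ w ∈ c.support, j ∉ w) (v : List α) :
    substAdd i j c v = c (v.map (update id j i)) := by
  rw [substAdd, Finsupp.linearCombination_apply, Finsupp.sum_apply]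
  conv_rhs => rw [← Finsupp.sum_ite_self_eq c]
  refine Finsupp.sum_congr fun w hw => ?_
  simp [Finsupp.single_apply, mem_splitWords_iff (hj w hw)]

theorem exists_map_update_eq {i j : α} (hij : i ≠ j) {w : List α} (hi : 2 ≤ w.count i)
    (hj : j ∉ w) : ∃ v : List α, i ∈ v ∧ j ∈ v ∧ v.map (update id j i) = w := by
  induction w with
  | nil => simp at hi
  | cons k w ih =>
    rw [List.mem_cons, not_or] at hj
    have hmap : w.map (update id j i) = w :=
      List.map_congr_left (fun k hk => update_of_ne (ne_of_mem_of_not_mem hk hj.2) _ _)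
        |>.trans (List.map_id w)
    by_cases hk : k = i
    · subst hk
      refine ⟨j :: w, List.mem_cons_of_mem _ ?_, List.mem_cons_self, by simp [hmap]⟩
      rw [List.count_cons_self] at hi
      exact List.count_pos_iff.1 (by omega)
    · rw [List.count_cons_of_ne hk] at hi
      obtain ⟨v, hiv, hjv, rfl⟩ := ih hi hj.2
      exact ⟨k :: v, List.mem_cons_of_mem _ hiv, List.mem_cons_of_mem _ hjv,
        by simp [update_of_ne (Ne.symm hj.1)]⟩

theorem toFinset_map_update_id {i j : α} (hij : i ≠ j) {v : List α} (hi : i ∈ v) :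
    (v.map (update id j i)).toFinset = v.toFinset.erase j := by
  ext k
  simp only [List.mem_toFinset, Finset.mem_erase, List.mem_map]
  constructor
  · rintro ⟨a, ha, rfl⟩
    by_cases haj : a = j
    · subst haj
      simpa using ⟨hij, hi⟩
    · simpa [haj] using ha
  · rintro ⟨hkj, hk⟩
    exact ⟨k, hk, update_of_ne hkj _ _⟩

/-- The partial linearization `f(x_i + x_j) - f(x_i) - f(x_j)`, computed as the part of
`f(x_i + x_j)` made of the words that contain both `i` and `j`. -/
noncomputable def linearize (i j : α) (c : List α →₀ F) : List α →₀ F :=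
  ((substAdd i j c).filter (j ∈ ·)).filter (i ∈ ·)

theorem linearize_apply {i j : α} {c : List α →₀ F} (hj : ∀ w ∈ c.support, j ∉ w)
    (v : List α) :
    linearize i j c v = if i ∈ v ∧ j ∈ v then c (v.map (update id j i)) else 0 := by
  simp only [linearize, Finsupp.filter_apply, substAdd_apply hj, ite_and]

theorem IsIdentity.linearize {c : List α →₀ F} (hc : IsIdentity A c) {i j : α} (hij : i ≠ j) :
    IsIdentity A (linearize i j c) :=
  ((hc.substAdd hij).filter_mem j).filter_mem i

theorem IsIdentity.exists_linearize [Infinite α] {c : List α →₀ F} (hc : IsIdentity A c)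
    {w : List α} (hw : w ∈ c.support) {i : α} (hi : 2 ≤ w.count i) :
    ∃ d : List α →₀ F, d ≠ 0 ∧ IsIdentity A d ∧
      ∀ v ∈ d.support, ∃ u ∈ c.support, v.length = u.length ∧
        u.toFinset.card + 1 = v.toFinset.card := by
  obtain ⟨j, hj⟩ := Infinite.exists_notMem_finset (c.support.biUnion List.toFinset)
  simp only [Finset.mem_biUnion, List.mem_toFinset, not_exists, not_and] at hj
  have hij : i ≠ j := by
    rintro rfl
    exact hj w hw (List.count_pos_iff.1 (by omega))
  refine ⟨PolyIdentity.linearize i j c, ?_, hc.linearize hij, fun v hv => ?_⟩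
  · obtain ⟨v, hiv, hjv, hvw⟩ := exists_map_update_eq hij hi (hj w hw)
    intro h
    have hv := linearize_apply (i := i) hj v
    rw [if_pos ⟨hiv, hjv⟩, hvw, h] at hv
    exact Finsupp.mem_support_iff.1 hw hv.symm
  · rw [Finsupp.mem_support_iff, linearize_apply hj] at hv
    split_ifs at hv with hijv
    · refine ⟨_, Finsupp.mem_support_iff.2 hv, (List.length_map _).symm, ?_⟩
      rw [toFinset_map_update_id hij hijv.1,
        Finset.card_erase_add_one (List.mem_toFinset.2 hijv.2)]
    · exact absurd rfl hv

end Substitution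

variable (A) in
def IsMultilinearIdentity {m : ℕ} (γ : Equiv.Perm (Fin m) → F) : Prop :=
  ∀ x : Fin m → A, ∑ σ, γ σ • (List.ofFn fun i => x (σ i)).prod = 0

theorem eval_eq_sum_perm [DecidableEq α] {c : List α →₀ F} {w : List α} (hw : w.Nodup)
    (hc : ∀ u ∈ c.support, u.Perm w) (y : α → A) :
    eval y c = ∑ σ : Equiv.Perm (Fin w.length),
      c (List.ofFn fun t => w.get (σ t)) • (List.ofFn fun t => y (w.get (σ t))).prod := by
  set word : Equiv.Perm (Fin w.length) → List α := fun σ => List.ofFn fun t => w.get (σ t)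
  have hinj : Injective word := fun σ τ h =>
    Equiv.ext fun t => hw.get_inj_iff.1 (congrFun (List.ofFn_injective h) t)
  have hsupp : c.support ⊆ Finset.univ.image word := fun u hu => by
    obtain ⟨σ, rfl⟩ := (hc u hu).exists_ofFn_get_eq hw
    exact Finset.mem_image_of_mem _ (Finset.mem_univ σ)
  rw [eval_apply, Finsupp.sum_of_support_subset c hsupp (fun w a => a • (w.map y).prod)
      (fun _ _ => zero_smul _ _),
    Finset.sum_image fun σ _ τ _ h => hinj h]
  simp [word, List.map_ofFn, comp_def]

theorem IsIdentity.exists_multilinear_of_nodup [DecidableEq α] {c : List α →₀ F}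
    (hc : IsIdentity A c) (hc0 : c ≠ 0) (hnd : ∀ w ∈ c.support, w.Nodup) :
    ∃ w ∈ c.support, ∃ γ : Equiv.Perm (Fin w.length) → F,
      γ 1 ≠ 0 ∧ IsMultilinearIdentity A γ := by
  obtain ⟨w, hw, hmin⟩ :=
    c.support.exists_min_image List.length (Finsupp.support_nonempty_iff.2 hc0)
  refine ⟨w, hw, fun σ => c (List.ofFn fun t => w.get (σ t)), ?_, fun x => ?_⟩
  · simpa [List.ofFn_get] using hw
  have hget := List.nodup_iff_injective_get.1 (hnd w hw)
  -- Setting the letters outside `w` to zero kills every word that is not a permutation of `w`.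
  set y : α → A := extend w.get x 0
  have hperm : ∀ u ∈ (c.filter (· ⊆ w)).support, u.Perm w := fun u hu => by
    rw [Finsupp.support_filter, Finset.mem_filter] at hu
    exact (List.subperm_of_subset (hnd u hu.1) hu.2).perm_of_length_le (hmin u hu.1)
  have h := eval_eq_sum_perm (hnd w hw) hperm y
  rw [eval_filter, hc y] at h
  · rw [h]
    refine Finset.sum_congr rfl fun σ _ => ?_
    have hsub : (List.ofFn fun t => w.get (σ t)) ⊆ w := fun k hk => by
      obtain ⟨t, rfl⟩ := List.mem_ofFn.1 hk
      exact List.get_mem _ _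
    simp only [y, hget.extend_apply]
    rw [Finsupp.filter_apply_pos (· ⊆ w) c hsub]
  · intro u _ hu
    obtain ⟨k, hku, hkw⟩ : ∃ k ∈ u, k ∉ w := by simpa [List.subset_def] using hu
    refine List.prod_eq_zero (List.mem_map.2 ⟨k, hku, extend_apply' _ _ _ ?_⟩)
    rintro ⟨t, rfl⟩
    exact hkw (List.get_mem _ _)

theorem IsIdentity.exists_multilinear_of_infinite [DecidableEq α] [Infinite α]
    {c : List α →₀ F} (hc : IsIdentity A c) (hc0 : c ≠ 0) {n : ℕ}
    (hlen : ∀ w ∈ c.support, w.length ≤ n) :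
    ∃ m ≤ n, ∃ γ : Equiv.Perm (Fin m) → F, γ 1 ≠ 0 ∧ IsMultilinearIdentity A γ := by
  have base : ∀ c : List α →₀ F, IsIdentity A c → c ≠ 0 → (∀ w ∈ c.support, w.length ≤ n) →
      (∀ w ∈ c.support, w.Nodup) →
      ∃ m ≤ n, ∃ γ : Equiv.Perm (Fin m) → F, γ 1 ≠ 0 ∧ IsMultilinearIdentity A γ :=
    fun c hc hc0 hlen hnd => by
      obtain ⟨w, hw, hγ⟩ := hc.exists_multilinear_of_nodup hc0 hnd
      exact ⟨w.length, hlen w hw, hγ⟩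
  obtain ⟨E, hE⟩ : ∃ E, ∀ w ∈ c.support, w.length ≤ w.toFinset.card + E :=
    ⟨n, fun w hw => (hlen w hw).trans (Nat.le_add_left _ _)⟩
  induction E generalizing c with
  | zero =>
    refine base c hc hc0 hlen fun w hw => ?_
    exact Multiset.toFinset_card_eq_card_iff_nodup.1
      (le_antisymm (List.toFinset_card_le w) (hE w hw))
  | succ E ih =>
    by_cases hnd : ∀ w ∈ c.support, w.Nodup
    · exact base c hc hc0 hlen hnd
    push Not at hnd
    obtain ⟨w, hw, hwnd⟩ := hnd
    obtain ⟨i, hi⟩ := List.exists_duplicate_iff_not_nodup.2 hwnd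
    obtain ⟨d, hd0, hd, hdsupp⟩ :=
      hc.exists_linearize hw (List.duplicate_iff_two_le_count.1 hi)
    refine ih hd hd0 (fun v hv => ?_) (fun v hv => ?_) <;>
      obtain ⟨u, hu, hlenu, hcard⟩ := hdsupp v hv
    · exact hlenu ▸ hlen u hu
    · have := hE u hu
      omega

theorem IsIdentity.exists_multilinear [DecidableEq α] {c : List α →₀ F} (hc : IsIdentity A c)
    (hc0 : c ≠ 0) {n : ℕ} (hlen : ∀ w ∈ c.support, w.length ≤ n) :
    ∃ m ≤ n, ∃ γ : Equiv.Perm (Fin m) → F, γ 1 ≠ 0 ∧ IsMultilinearIdentity A γ := by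
  -- Linearization needs fresh variables, so pass to the infinite alphabet `α ⊕ ℕ`.
  have hinj : Injective (List.map (Sum.inl : α → α ⊕ ℕ)) :=
    List.map_injective_iff.2 Sum.inl_injective
  refine (hc.mapDomain_map (Sum.inl : α → α ⊕ ℕ)).exists_multilinear_of_infinite ?_ ?_
  · simpa using (Finsupp.mapDomain_injective hinj).ne hc0
  · simpa [Finsupp.mapDomain_support_of_injective hinj] using hlen

end Semiring

section Field

variable [Field F] [Ring A] [Algebra F A] {m : ℕ} {γ : Equiv.Perm (Fin m) → F}

theorem IsMultilinearIdentity.pos [Nontrivial A] (h : IsMultilinearIdentity A γ) (h1 : γ 1 ≠ 0) :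
    0 < m := by
  refine Nat.pos_of_ne_zero fun hm => h1 ?_
  subst hm
  have := h Fin.elim0
  rw [Fintype.sum_subsingleton _ 1] at this
  simpa using this

theorem IsMultilinearIdentity.exists_admissible (h : IsMultilinearIdentity A γ) (h1 : γ 1 ≠ 0) :
    ∃ β : Equiv.Perm (Fin m) → F, ∀ x : Fin m → A, (List.ofFn x).prod =
      ∑ σ ∈ Finset.univ.filter (fun σ : Equiv.Perm (Fin m) => σ ≠ 1),
        β σ • (List.ofFn fun i => x (σ i)).prod := by
  refine ⟨fun σ => -(γ 1)⁻¹ * γ σ, fun x => ?_⟩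
  have hx := h x
  rw [← Finset.add_sum_erase _ _ (Finset.mem_univ 1)] at hx
  simp_rw [Finset.filter_ne', mul_smul, ← Finset.smul_sum, eq_neg_of_add_eq_zero_right hx,
    smul_neg, neg_smul, neg_neg, smul_smul, inv_mul_cancel₀ h1, one_smul]
  rfl

end Field

end PolyIdentity

theorem stmt_15_general {F A : Type*} [Field F] [Ring A] [Algebra F A] [Nontrivial A]
    (n : ℕ) (c : (List (Fin n)) →₀ F) (hc : c ≠ 0)
    (hdeg : ∀ w ∈ c.support, w.length ≤ n)
    (hid : ∀ x : Fin n → A, (c.sum fun w a => a • (w.map x).prod) = 0) :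
    ∃ m, m ≤ n ∧ 0 < m ∧ ∃ β : Equiv.Perm (Fin m) → F,
      ∀ x : Fin m → A, (List.ofFn x).prod =
        ∑ σ ∈ Finset.univ.filter (fun σ : Equiv.Perm (Fin m) => σ ≠ 1),
          β σ • (List.ofFn fun i => x (σ i)).prod := by
  have hc' : PolyIdentity.IsIdentity A c := fun x => (PolyIdentity.eval_apply x c).trans (hid x)
  obtain ⟨m, hmn, γ, hγ1, hγ⟩ := hc'.exists_multilinear hc hdeg
  exact ⟨m, hmn, hγ.pos hγ1, hγ.exists_admissible hγ1⟩

/-- If a (nonzero) polynomial identity of degree `n` holds in an associative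
algebra over a field, then a multilinear admissible identity of degree `m ≤ n`
holds: `x₁x₂⋯x_m = ∑_{σ ≠ id} β_σ x_{σ(1)}⋯x_{σ(m)}`.
Here a polynomial is encoded by its coefficient function `c` on words in the
variables `x_1,…,x_n`. -/
theorem stmt_15 {F A : Type*} [Field F] [Ring A] [Algebra F A] [Nontrivial A]
    (n : ℕ) (c : (List (Fin n)) →₀ F) (hc : c ≠ 0)
    (hdeg : ∀ w ∈ c.support, w.length ≤ n)
    (htop : ∃ w ∈ c.support, w.length = n)
    (hid : ∀ x : Fin n → A, (c.sum fun w a => a • (w.map x).prod) = 0) :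
    ∃ m, m ≤ n ∧ 0 < m ∧ ∃ β : Equiv.Perm (Fin m) → F,
      ∀ x : Fin m → A, (List.ofFn x).prod =
        ∑ σ ∈ Finset.univ.filter (fun σ : Equiv.Perm (Fin m) => σ ≠ 1),
          β σ • (List.ofFn fun i => x (σ i)).prod :=
  stmt_15_general n c hc hdeg hid
end

section
/- Let W be a word over an ordered alphabet that is not n-divisible. If W contains 2n−1 pairwise disjoint subwords of the form x^{p_1}v'_1, ..., x^{p_{2n-1}}v'_{2n-1} where each p_i > n, x is a fixed word, and each v'_i is a word of length |x| comparable with but different from x, then among the v'_i there are n that are all lexicographically greater than x or n that are all lexicographically smaller than x; in the former case W contains the n disjoint subwords v'_1, x v'_2, x^2 v'_3, ..., x^{n-1} v'_n occurring left to right in strictly decreasing lexicographic order, so W is n-divisible — a contradiction. -/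
/-! By pigeonhole, `n` of the continuations `v'_i` lie on the same side of `x`. If they all
exceed `x`, the suffixes `x^k v'_{i_k}` (`k < n`) of the chosen fragments decrease strictly, and
robustly so: `x^{k+1} v'_{i_{k+1}}` and `x^k v'_{i_k}` already differ inside the block where `x`
faces `v'_{i_k}`, so whatever follows them in `W` does not matter. If they are all below `x`, the
exponents `n - k` do the same job. Cutting `W` at the starts of these suffixes divides it. -/

open List

theorem Finset.exists_orderEmbedding_fin_of_le_card {ι : Type*} [LinearOrder ι] {s : Finset ι}
    {n : ℕ} (h : n ≤ s.card) : ∃ I : Fin n ↪o ι, ∀ k, I k ∈ s := by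
  obtain ⟨t, hts, rfl⟩ := Finset.exists_subset_card_eq h
  exact ⟨t.orderEmbOfFin rfl, fun k => hts (t.orderEmbOfFin_mem rfl k)⟩

theorem exists_orderEmbedding_fin_forall_or_forall_not {ι : Type*} [LinearOrder ι] [Fintype ι]
    (P : ι → Prop) {n : ℕ} (h : 2 * n - 1 ≤ Fintype.card ι) :
    ∃ I : Fin n ↪o ι, (∀ k, P (I k)) ∨ ∀ k, ¬ P (I k) := by
  classical
  have hsum := Finset.card_filter_add_card_filter_not (s := Finset.univ) P
  rw [Finset.card_univ] at hsum
  obtain hP | hnP : n ≤ (Finset.univ.filter P).card ∨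
      n ≤ (Finset.univ.filter fun i => ¬ P i).card := by omega
  · obtain ⟨I, hI⟩ := Finset.exists_orderEmbedding_fin_of_le_card hP
    exact ⟨I, Or.inl fun k => (Finset.mem_filter.1 (hI k)).2⟩
  · obtain ⟨I, hI⟩ := Finset.exists_orderEmbedding_fin_of_le_card hnP
    exact ⟨I, Or.inr fun k => (Finset.mem_filter.1 (hI k)).2⟩

namespace List

variable {α : Type*}

theorem IsPrefix.drop_add_length {u w W : List α} {i : ℕ} (h : u ++ w <+: W.drop i) :
    w <+: W.drop (i + u.length) := by
  obtain ⟨r, hr⟩ := h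
  exact ⟨r, by rw [← drop_drop, ← hr, append_assoc, drop_left]⟩

/-- Occurrences `c <+: W.drop q` of words `c` at increasing, non-overlapping positions `q` cut
`W` into a prefix followed by the blocks `c ++ w`, each `w` running up to the next occurrence. -/
theorem exists_drop_eq_append_flatten_zipWith (W : List α) :
    ∀ fs : List (ℕ × List α), (∀ f ∈ fs, f.2 <+: W.drop f.1) →
      fs.Pairwise (fun a b => a.1 + a.2.length ≤ b.1) → ∀ i, (∀ f ∈ fs, i ≤ f.1) →
      ∃ v ws, ws.length = fs.length ∧
        W.drop i = v ++ (zipWith (· ++ ·) (fs.map Prod.snd) ws).flatten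
  | [], _, _, i, _ => ⟨W.drop i, [], rfl, by simp⟩
  | (q, c) :: fs, hocc, hdisj, i, hi => by
    rw [pairwise_cons] at hdisj
    obtain ⟨v, ws, hlen, hW⟩ := exists_drop_eq_append_flatten_zipWith W fs
      (fun f hf => hocc f (mem_cons_of_mem _ hf)) hdisj.2 (q + c.length) hdisj.1
    have hiq : i ≤ q := hi (q, c) mem_cons_self
    have hc : W.drop q = c ++ W.drop (q + c.length) := by
      obtain ⟨r, hr⟩ := hocc (q, c) mem_cons_self
      rw [← drop_drop, ← hr, drop_left]
    have hiq' : W.drop q = (W.drop i).drop (q - i) := by rw [drop_drop, Nat.add_sub_cancel' hiq]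
    refine ⟨(W.drop i).take (q - i), v :: ws, by simp [hlen], ?_⟩
    calc W.drop i = (W.drop i).take (q - i) ++ W.drop q := by rw [hiq', take_append_drop]
      _ = _ := by rw [hc, hW]; simp

theorem isChain_zipWith_append [LT α] : ∀ {cs ws : List (List α)},
    cs.IsChain (fun a b => ∀ s t, b ++ t < a ++ s) →
      (zipWith (· ++ ·) cs ws).IsChain (fun a b => b < a)
  | c :: c' :: cs, w :: w' :: ws, h => by
    rw [isChain_cons_cons] at h
    exact isChain_cons_cons.2 ⟨h.1 w w', isChain_zipWith_append (ws := w' :: ws) h.2⟩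
  | [], _, _ | _ :: _, [], _ | [_], _ :: _, _ | _ :: _ :: _, [_], _ => by simp

theorem isMDivisible_of_occurrences [LT α] (W : List α) (fs : List (ℕ × List α))
    (hne : ∀ f ∈ fs, f.2 ≠ []) (hocc : ∀ f ∈ fs, f.2 <+: W.drop f.1)
    (hdisj : fs.Pairwise (fun a b => a.1 + a.2.length ≤ b.1))
    (hlt : (fs.map Prod.snd).IsChain (fun a b => ∀ s t, b ++ t < a ++ s)) :
    IsMDivisible fs.length W := by
  obtain ⟨v, ws, hlen, hW⟩ :=
    exists_drop_eq_append_flatten_zipWith W fs hocc hdisj 0 (by simp)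
  refine ⟨v, zipWith (· ++ ·) (fs.map Prod.snd) ws, by simp [hlen], ?_, by simpa using hW,
    isChain_zipWith_append hlt⟩
  intro u hu
  obtain ⟨j, hj, rfl⟩ := mem_iff_getElem.1 hu
  simp only [getElem_zipWith, getElem_map, ne_eq, append_eq_nil_iff, not_and]
  exact fun h => absurd h (hne _ (getElem_mem _))

theorem append_lt_append_of_lt_of_length_eq [LT α] :
    ∀ {a b : List α}, a < b → a.length = b.length → ∀ s t : List α, a ++ s < b ++ t
  | _, _, .nil, hl, _, _ => by simp at hl
  | _, _, .rel h, _, _, _ => .rel h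
  | _, _, .cons h, hl, s, t =>
    .cons (append_lt_append_of_lt_of_length_eq h (by simpa using hl) s t)

theorem flatten_replicate_append_lt_of_lt [LT α] {x v : List α} (hxv : x < v)
    (hl : x.length = v.length) {k l : ℕ} (hkl : k < l) (s t : List α) :
    (replicate l x).flatten ++ s < (replicate k x).flatten ++ v ++ t := by
  obtain ⟨m, rfl⟩ := Nat.exists_eq_add_of_lt hkl
  rw [Nat.add_assoc, replicate_add, flatten_append, replicate_succ, flatten_cons]
  simp only [append_assoc]
  exact append_left_lt (append_lt_append_of_lt_of_length_eq hxv hl _ _)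

theorem flatten_replicate_append_lt_of_gt [LT α] {x v : List α} (hvx : v < x)
    (hl : v.length = x.length) {k l : ℕ} (hkl : k < l) (s t : List α) :
    (replicate k x).flatten ++ v ++ s < (replicate l x).flatten ++ t := by
  obtain ⟨m, rfl⟩ := Nat.exists_eq_add_of_lt hkl
  rw [Nat.add_assoc, replicate_add, flatten_append, replicate_succ, flatten_cons]
  simp only [append_assoc]
  exact append_left_lt (append_lt_append_of_lt_of_length_eq hvx hl _ _)

theorem isMDivisible_of_periodic_occurrences [LT α] {n : ℕ} (W x : List α)
    (v : Fin n → List α) (p pos e : Fin n → ℕ) (hv : ∀ k, v k ≠ [])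
    (he : ∀ k, e k ≤ p k)
    (hocc : ∀ k, (replicate (p k) x).flatten ++ v k <+: W.drop (pos k))
    (hdisj : ∀ k l, k < l → pos k + ((replicate (p k) x).flatten ++ v k).length ≤ pos l)
    (hlt : ∀ k l, k < l → ∀ s t,
      (replicate (e l) x).flatten ++ v l ++ t < (replicate (e k) x).flatten ++ v k ++ s) :
    IsMDivisible n W := by
  have hsplit : ∀ k, (replicate (p k) x).flatten ++ v k =
      (replicate (p k - e k) x).flatten ++ ((replicate (e k) x).flatten ++ v k) := by
    intro k
    rw [← append_assoc, ← flatten_append, ← replicate_add, Nat.sub_add_cancel (he k)]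
  have hlen : ∀ k, ((replicate (p k) x).flatten ++ v k).length =
      ((replicate (p k - e k) x).flatten).length +
        ((replicate (e k) x).flatten ++ v k).length := by
    intro k
    rw [hsplit k, length_append]
  simpa using isMDivisible_of_occurrences W
    (ofFn fun k => (pos k + ((replicate (p k - e k) x).flatten).length,
      (replicate (e k) x).flatten ++ v k))
    (forall_mem_ofFn_iff.2 fun k => by simp [hv])
    (forall_mem_ofFn_iff.2 fun k => (hsplit k ▸ hocc k).drop_add_length)
    (pairwise_ofFn.2 fun k l hkl => by have := hdisj k l hkl; rw [hlen] at this; dsimp only; omega)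
    (by rw [map_ofFn]; exact (pairwise_ofFn.2 hlt).isChain)

end List

theorem stmt_18_general {α : Type*} [LinearOrder α] (n : ℕ)
    (W x : List α)
    (hnd : ¬ IsMDivisible n W)
    (p : Fin (2 * n - 1) → ℕ) (hp : ∀ i, n < p i)
    (v : Fin (2 * n - 1) → List α)
    (hvlen : ∀ i, (v i).length = x.length) (hvx : ∀ i, v i ≠ x)
    (pos : Fin (2 * n - 1) → ℕ)
    (hocc : ∀ i, (W.drop (pos i)).take ((List.replicate (p i) x).flatten ++ v i).length =
      (List.replicate (p i) x).flatten ++ v i)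
    (hdisj : ∀ i j : Fin (2 * n - 1), i < j →
      pos i + ((List.replicate (p i) x).flatten ++ v i).length ≤ pos j) :
    False := by
  have hv : ∀ i, v i ≠ [] := fun i h => hvx i (by simpa [h, eq_comm] using hvlen i)
  have hprefix : ∀ i, (replicate (p i) x).flatten ++ v i <+: W.drop (pos i) :=
    fun i => prefix_iff_eq_take.2 (hocc i).symm
  obtain ⟨I, hxv | hnxv⟩ :=
    exists_orderEmbedding_fin_forall_or_forall_not (fun i => x < v i) (n := n) (by simp)
  · refine hnd (isMDivisible_of_periodic_occurrences W x (fun k => v (I k)) (fun k => p (I k))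
      (fun k => pos (I k)) Fin.val (fun k => hv _) (fun k => by have := hp (I k); omega)
      (fun k => hprefix _) (fun k l hkl => hdisj _ _ (I.strictMono hkl)) fun k l hkl s t => ?_)
    simpa only [append_assoc] using
      flatten_replicate_append_lt_of_lt (hxv k) (hvlen _).symm hkl (v (I l) ++ t) s
  · refine hnd (isMDivisible_of_periodic_occurrences W x (fun k => v (I k)) (fun k => p (I k))
      (fun k => pos (I k)) (fun k => n - k) (fun k => hv _) (fun k => by have := hp (I k); omega)
      (fun k => hprefix _) (fun k l hkl => hdisj _ _ (I.strictMono hkl)) fun k l hkl s t => ?_)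
    have hvx' : v (I l) < x := lt_of_le_of_ne (not_lt.1 (hnxv l)) (hvx _)
    simpa only [append_assoc] using flatten_replicate_append_lt_of_gt hvx' (hvlen _)
      (k := n - l) (l := n - k) (by omega) t (v (I k) ++ s)

/-- If a non-`n`-divisible word `W` contains `2n-1` pairwise disjoint subwords
`x^{p_i} v'_i` (occurring left to right), with all `p_i > n` and each `v'_i` a
word of length `|x|` different from `x`, then we get a contradiction: such a
configuration forces `n`-divisibility of `W`. -/
theorem stmt_18 {α : Type*} [LinearOrder α] (n : ℕ) (hn : 1 ≤ n)
    (W x : List α) (hx : x ≠ [])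
    (hnd : ¬ IsMDivisible n W)
    (p : Fin (2 * n - 1) → ℕ) (hp : ∀ i, n < p i)
    (v : Fin (2 * n - 1) → List α)
    (hvlen : ∀ i, (v i).length = x.length) (hvx : ∀ i, v i ≠ x)
    (pos : Fin (2 * n - 1) → ℕ)
    (hocc : ∀ i, (W.drop (pos i)).take ((List.replicate (p i) x).flatten ++ v i).length =
      (List.replicate (p i) x).flatten ++ v i)
    (hdisj : ∀ i j : Fin (2 * n - 1), i < j →
      pos i + ((List.replicate (p i) x).flatten ++ v i).length ≤ pos j) :
    False :=
  stmt_18_general n W x hnd p hp v hvlen hvx pos hocc hdisj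
end
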